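/- arXiv:1211.6401 — 8 statements merged into one kernel-verified Lean document; each statement's English description precedes it below -/
import Mathlib

section
/- Fix integers n ≥ 1 and s ≥ 1 and let x₀ ∈ ℝⁿ satisfy ‖x₀‖₀ = s. Then the feasible-direction set F(x₀) = {v ∈ ℝⁿ : ∃ ε₀ > 0, ∀ ε ∈ (0, ε₀), ‖x₀ + εv‖₀ ≤ s} is exactly the set {v ∈ ℝⁿ : supp(v) ⊆ supp(x₀)}, i.e. the linear span of the standard basis vectors e_i with i ∈ supp(x₀). -/
open Finset

/-- For `x₀ ∈ ℝⁿ` with exactly `s ≥ 1` nonzero entries, the feasible-direction set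
`F(x₀) = {v : ∃ ε₀ > 0, ∀ ε ∈ (0, ε₀), ‖x₀ + εv‖₀ ≤ s}` equals the set of vectors whose
support is contained in the support of `x₀`. -/
theorem feasible_directions_maximal_support
    {n s : ℕ} (hn : 1 ≤ n) (hs : 1 ≤ s) (x₀ : Fin n → ℝ)
    (hx₀ : (Finset.univ.filter (fun i => x₀ i ≠ 0)).card = s) :
    {v : Fin n → ℝ | ∃ ε₀ > (0 : ℝ), ∀ ε ∈ Set.Ioo (0 : ℝ) ε₀,
        (Finset.univ.filter (fun i => x₀ i + ε * v i ≠ 0)).card ≤ s}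
      = {v : Fin n → ℝ | ∀ i, v i ≠ 0 → x₀ i ≠ 0} := by
  ext v
  simp only [Set.mem_setOf_eq]
  constructor
  · rintro ⟨ε₀, hε₀, hsmall⟩ i hvi
    by_contra hx
    set T := Finset.univ.filter (fun j => x₀ j ≠ 0) with hT
    have hTne : T.Nonempty := Finset.card_pos.mp (by omega)
    set δ := T.inf' hTne (fun j => |x₀ j| / (|v j| + 1)) with hδ
    have hδpos : 0 < δ := by
      rw [hδ, Finset.lt_inf'_iff]
      intro j hj
      have hjx : x₀ j ≠ 0 := (Finset.mem_filter.mp hj).2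
      have : 0 < |x₀ j| := abs_pos.mpr hjx
      positivity
    set ε := min ε₀ δ / 2 with hε
    have hεpos : 0 < ε := by positivity
    have hεlt : ε < ε₀ := by
      have := min_le_left ε₀ δ
      rw [hε]; linarith
    have hεδ : ε < δ := by
      have := min_le_right ε₀ δ
      rw [hε]; linarith
    have key := hsmall ε ⟨hεpos, hεlt⟩
    have hiT : i ∉ T := by simp [hT, hx]
    have hsub : insert i T ⊆ Finset.univ.filter (fun j => x₀ j + ε * v j ≠ 0) := by
      intro j hj
      simp only [Finset.mem_insert] at hj
      simp only [Finset.mem_filter, Finset.mem_univ, true_and]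
      rcases hj with rfl | hj
      · rw [hx, zero_add]
        exact mul_ne_zero (ne_of_gt hεpos) hvi
      · have hjx : x₀ j ≠ 0 := (Finset.mem_filter.mp hj).2
        have hδle : δ ≤ |x₀ j| / (|v j| + 1) := Finset.inf'_le _ hj
        have hvj : (0:ℝ) < |v j| + 1 := by positivity
        have h1 : ε * (|v j| + 1) < |x₀ j| := by
          have : ε < |x₀ j| / (|v j| + 1) := lt_of_lt_of_le hεδ hδle
          calc ε * (|v j| + 1) < (|x₀ j| / (|v j| + 1)) * (|v j| + 1) := by
                exact mul_lt_mul_of_pos_right this hvj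
            _ = |x₀ j| := div_mul_cancel₀ _ (ne_of_gt hvj)
        have h2 : |ε * v j| < |x₀ j| := by
          rw [abs_mul, abs_of_pos hεpos]
          have : ε * |v j| ≤ ε * (|v j| + 1) := by nlinarith [abs_nonneg (v j)]
          linarith
        intro heq
        have : ε * v j = -x₀ j := by linarith
        rw [this, abs_neg] at h2
        exact lt_irrefl _ h2
    have hcard : s + 1 ≤ (Finset.univ.filter (fun j => x₀ j + ε * v j ≠ 0)).card := by
      calc s + 1 = (insert i T).card := by rw [Finset.card_insert_of_notMem hiT, hx₀]
        _ ≤ _ := Finset.card_le_card hsub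
    omega
  · intro h
    refine ⟨1, one_pos, fun ε hε => ?_⟩
    rw [← hx₀]
    apply Finset.card_le_card
    intro j hj
    simp only [Finset.mem_filter, Finset.mem_univ, true_and] at hj ⊢
    intro hjx
    apply hj
    have hvj : v j = 0 := by
      by_contra hv
      exact (h j hv) hjx
    rw [hjx, hvj, mul_zero, add_zero]
end

section
/- (Theorem 1, CCRB for maximal support.) Let A be an m×n real matrix, S ⊆ {1,…,n} with |S| = s ≥ 1, and suppose the columns of A indexed by S are linearly independent (so that A_Sᵀ A_S is invertible). Let x ∈ ℝⁿ with supp(x) = S, let σₑ ≥ 0, σₙ ≥ 0 with σ_x² := σₑ²‖x‖₂² + σₙ² > 0, and set J = (1/σ_x²)·[AᵀA + 2mσₑ⁴·x xᵀ/σ_x²]. Let V be the n×s matrix whose columns are the standard basis vectors e_i, i ∈ S. Then VᵀJV is invertible and tr((VᵀJV)⁻¹) = σ_x²·[ tr((A_SᵀA_S)⁻¹) − 2mσₑ⁴·‖(A_SᵀA_S)⁻¹ x_S‖₂² / (σ_x² + 2mσₑ⁴·x_Sᵀ(A인_SᵀA_S)⁻¹ x_S) ], where A_S denotes the m×s submatrix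 of A with columns indexed by S and x_S ∈ ℝˢ the subvector of x indexed by S. -/
/-!
Restricting to the support, `VᵀJV` is the principal `S × S` block of `J`, namely
`σ_x⁻² (B + c x_S x_Sᵀ)` with `B = A_SᵀA_S` positive definite (its columns are independent) and
`c = 2mσₑ⁴/σ_x² ≥ 0`. This is a rank-one update of an invertible matrix, so Sherman–Morrison gives
`(B + c x_S x_Sᵀ)⁻¹ = B⁻¹ - c/(1 + c x_SᵀB⁻¹x_S) · B⁻¹x_S x_SᵀB⁻¹`, where the denominator is
positive; since `B⁻¹` is symmetric the trace of the correction term is `‖B⁻¹x_S‖²`.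
-/
open Matrix

namespace Matrix

section ShermanMorrison

variable {ι K : Type*} [Fintype ι] [DecidableEq ι] [Field K]
  {B : Matrix ι ι K} {u v : ι → K}

theorem add_vecMulVec_mul_sub_eq_one (hB : IsUnit B) (h : 1 + v ⬝ᵥ B⁻¹ *ᵥ u ≠ 0) :
    (B + vecMulVec u v) * (B⁻¹ - (1 + v ⬝ᵥ B⁻¹ *ᵥ u)⁻¹ • (B⁻¹ * vecMulVec u v * B⁻¹)) = 1 := by
  set q := v ⬝ᵥ B⁻¹ *ᵥ u
  have hBB : B * B⁻¹ = 1 := mul_nonsing_inv B ((isUnit_iff_isUnit_det B).mp hB)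
  have hsq : vecMulVec u v * (B⁻¹ * vecMulVec u v) = q • vecMulVec u v := by
    rw [mul_vecMulVec, vecMulVec_mul_vecMulVec, vecMulVec_smul]
  have hW : (B + vecMulVec u v) * (B⁻¹ * vecMulVec u v * B⁻¹)
      = (1 + q) • (vecMulVec u v * B⁻¹) := by
    rw [add_mul, ← mul_assoc, ← mul_assoc, hBB, Matrix.one_mul, ← mul_assoc (vecMulVec u v), hsq,
      add_smul, one_smul, smul_mul_assoc]
  rw [mul_sub, mul_smul_comm, hW, smul_smul, inv_mul_cancel₀ h, one_smul, add_mul, hBB,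
    add_sub_cancel_right]

theorem isUnit_add_vecMulVec (hB : IsUnit B) (h : 1 + v ⬝ᵥ B⁻¹ *ᵥ u ≠ 0) :
    IsUnit (B + vecMulVec u v) :=
  (isUnit_iff_isUnit_det _).mpr (isUnit_det_of_right_inverse (add_vecMulVec_mul_sub_eq_one hB h))

theorem inv_add_vecMulVec (hB : IsUnit B) (h : 1 + v ⬝ᵥ B⁻¹ *ᵥ u ≠ 0) :
    (B + vecMulVec u v)⁻¹ = B⁻¹ - (1 + v ⬝ᵥ B⁻¹ *ᵥ u)⁻¹ • (B⁻¹ * vecMulVec u v * B⁻¹) :=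
  inv_eq_right_inv (add_vecMulVec_mul_sub_eq_one hB h)

end ShermanMorrison

variable {ι κ R : Type*}

theorem trace_mul_vecMulVec_mul [Fintype ι] [Fintype κ] [CommSemiring R]
    (M : Matrix ι κ R) (N : Matrix κ ι R) (u v : κ → R) :
    (M * vecMulVec u v * N).trace = (M *ᵥ u) ⬝ᵥ (v ᵥ* N) := by
  rw [mul_vecMulVec, vecMulVec_mul, trace_vecMulVec]

theorem transpose_mul_mul_one_submatrix [Fintype ι] [DecidableEq ι] [NonAssocSemiring R]
    (M : Matrix ι ι R) (f : κ → ι) :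
    ((1 : Matrix ι ι R).submatrix id f)ᵀ * M * (1 : Matrix ι ι R).submatrix id f
      = M.submatrix f f := by
  ext i j
  simp [mul_apply, one_apply]

end Matrix

theorem ccrb_maximal_support_general
    {m n : ℕ} (A : Matrix (Fin m) (Fin n) ℝ) (S : Finset (Fin n))
    (hindep : LinearIndependent ℝ (fun j : S => fun k : Fin m => A k j))
    (x : Fin n → ℝ)
    (σe : ℝ)
    (σx2 : ℝ) (hσx2pos : 0 < σx2)
    (J : Matrix (Fin n) (Fin n) ℝ)
    (hJ : J = (1 / σx2) • (Aᵀ * A + (2 * m * σe ^ 4 / σx2) • vecMulVec x x))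
    (V : Matrix (Fin n) S ℝ)
    (hV : V = fun i (j : S) => if i = (j : Fin n) then (1 : ℝ) else 0)
    (AS : Matrix (Fin m) S ℝ) (hAS : AS = fun k (j : S) => A k j)
    (xS : S → ℝ) (hxS : xS = fun j : S => x j) :
    IsUnit (Vᵀ * J * V) ∧
    ((Vᵀ * J * V)⁻¹).trace
      = σx2 * (((ASᵀ * AS)⁻¹).trace
          - 2 * m * σe ^ 4 * (∑ j, (((ASᵀ * AS)⁻¹ *ᵥ xS) j) ^ 2)
            / (σx2 + 2 * m * σe ^ 4 * (xS ⬝ᵥ (ASᵀ * AS)⁻¹ *ᵥ xS))) := by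
  have hσ : σx2 ≠ 0 := hσx2pos.ne'
  set c := 2 * m * σe ^ 4 / σx2 with hc
  set B := ASᵀ * AS
  have hB : B.PosDef := by
    simpa using PosDef.conjTranspose_mul_self AS (hAS ▸ mulVec_injective_iff.mpr hindep)
  have hFisher : Vᵀ * J * V = σx2⁻¹ • (B + vecMulVec (c • xS) xS) := by
    have hV' : V = (1 : Matrix (Fin n) (Fin n) ℝ).submatrix id Subtype.val := by
      ext i j; simp [hV, one_apply]
    rw [hV', transpose_mul_mul_one_submatrix, hJ, one_div, smul_vecMulVec]
    subst hAS hxS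
    -- the `S × S` block of `AᵀA` is `A_SᵀA_S` by unfolding both products
    rfl
  have hden : 1 + xS ⬝ᵥ B⁻¹ *ᵥ (c • xS) ≠ 0 := by
    have hq : 0 ≤ xS ⬝ᵥ B⁻¹ *ᵥ xS := by
      simpa using hB.inv.posSemidef.dotProduct_mulVec_nonneg xS
    rw [mulVec_smul, dotProduct_smul, smul_eq_mul]
    positivity
  have hunit := isUnit_add_vecMulVec hB.isUnit hden
  refine ⟨hFisher ▸ hunit.smul (Units.mk0 _ (inv_ne_zero hσ)), ?_⟩
  have hsymm : xS ᵥ* B⁻¹ = B⁻¹ *ᵥ xS := by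
    rw [← vecMul_transpose, transpose_nonsing_inv, transpose_mul, transpose_transpose]
  have hnorm : ∑ j, (B⁻¹ *ᵥ xS) j ^ 2 = (B⁻¹ *ᵥ xS) ⬝ᵥ (B⁻¹ *ᵥ xS) := by
    simp only [dotProduct, sq]
  have : Invertible σx2⁻¹ := invertibleOfNonzero (inv_ne_zero hσ)
  rw [hFisher, inv_smul _ σx2⁻¹ ((isUnit_iff_isUnit_det _).mp hunit), invOf_eq_inv, inv_inv,
    inv_add_vecMulVec hB.isUnit hden, trace_smul, trace_sub, trace_smul, trace_mul_vecMulVec_mul,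
    hsymm, hnorm, mulVec_smul, dotProduct_smul, smul_dotProduct, hc]
  simp only [smul_eq_mul]
  field_simp

/-- Theorem 1 (CCRB for maximal support). Let `A` be `m×n`, `S ⊆ {1,…,n}` with `|S| = s ≥ 1`
and linearly independent columns `A_S`, `x` a parameter with `supp(x) = S`,
`σ_x² = σₑ²‖x‖₂² + σₙ² > 0`, and `J = (1/σ_x²)(AᵀA + 2mσₑ⁴ x xᵀ/σ_x²)` the Fisher
information matrix.  With `V` the `n×s` matrix of standard basis columns `e_i`, `i ∈ S`,
the matrix `VᵀJV` is invertible and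
`tr((VᵀJV)⁻¹) = σ_x² [tr((A_SᵀA_S)⁻¹) − 2mσₑ⁴‖(A_SᵀA_S)⁻¹x_S‖₂²
  / (σ_x² + 2mσₑ⁴ x_Sᵀ(A_SᵀA_S)⁻¹x_S)]`. -/
theorem ccrb_maximal_support
    {m n : ℕ} (A : Matrix (Fin m) (Fin n) ℝ) (S : Finset (Fin n)) (s : ℕ)
    (hcard : S.card = s) (hs : 1 ≤ s)
    (hindep : LinearIndependent ℝ (fun j : S => fun k : Fin m => A k j))
    (x : Fin n → ℝ) (hsupp : ∀ i, x i ≠ 0 ↔ i ∈ S)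
    (σe σn : ℝ) (hσe : 0 ≤ σe) (hσn : 0 ≤ σn)
    (σx2 : ℝ) (hσx2 : σx2 = σe ^ 2 * ∑ i, x i ^ 2 + σn ^ 2) (hσx2pos : 0 < σx2)
    (J : Matrix (Fin n) (Fin n) ℝ)
    (hJ : J = (1 / σx2) • (Aᵀ * A + (2 * m * σe ^ 4 / σx2) • vecMulVec x x))
    (V : Matrix (Fin n) S ℝ)
    (hV : V = fun i (j : S) => if i = (j : Fin n) then (1 : ℝ) else 0)
    (AS : Matrix (Fin m) S ℝ) (hAS : AS = fun k (j : S) => A k j)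
    (xS : S → ℝ) (hxS : xS = fun j : S => x j) :
    IsUnit (Vᵀ * J * V) ∧
    ((Vᵀ * J * V)⁻¹).trace
      = σx2 * (((ASᵀ * AS)⁻¹).trace
          - 2 * m * σe ^ 4 * (∑ j, (((ASᵀ * AS)⁻¹ *ᵥ xS) j) ^ 2)
            / (σx2 + 2 * m * σe ^ 4 * (xS ⬝ᵥ (ASᵀ * AS)⁻¹ *ᵥ xS))) :=
  ccrb_maximal_support_general A S hindep x σe σx2 hσx2pos J hJ V hV AS hAS xS hxS
end

section
/- (Theorem 2, CCRB for nonmaximal support with full-column-rank sensing matrix.) Let A be an m×n real matrix with linearly independent columns (so AᵀA is invertible), let x ∈ ℝⁿ, σₑ ≥ 0, σₙ ≥ 0 with σ_x² := σₑ²‖x‖₂² + σₙ² > 0, and set J = (1/σ_x²)·[AᵀA + 2mσₑ⁴·x xᵀ/σ_x²]. Then J is invertible and tr(J⁻¹) = σ_x²·[ tr((AᵀA)⁻¹) − 2mσₑ⁴·‖(AᵀA)⁻¹x‖₂² / (σ_x² + 2mσₑ⁴·xᵀ(AᵀA)⁻¹x) ]. -/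
/-!
`J` is `σ_x⁻²` times the rank-one update `AᵀA + c x xᵀ` (with `c = 2mσₑ⁴/σ_x² ≥ 0`) of the
positive definite Gram matrix `AᵀA`, so the Sherman–Morrison formula inverts it: the denominator
`1 + c xᵀ(AᵀA)⁻¹x` is positive. Taking traces, `tr(u vᵀ) = vᵀu` turns the correction term into
`‖(AᵀA)⁻¹x‖₂²`, using the symmetry of `(AᵀA)⁻¹`.
-/

open Matrix

namespace Matrix

variable {ι K : Type*} [Fintype ι] [DecidableEq ι] [Field K]

theorem add_smul_vecMulVec_mul_eq_one {B : Matrix ι ι K} (hB : IsUnit B) {c : K} {u v : ι → K}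
    (h : 1 + c * (v ⬝ᵥ B⁻¹ *ᵥ u) ≠ 0) :
    (B + c • vecMulVec u v) *
      (B⁻¹ - (c / (1 + c * (v ⬝ᵥ B⁻¹ *ᵥ u))) • vecMulVec (B⁻¹ *ᵥ u) (v ᵥ* B⁻¹)) = 1 := by
  set q := v ⬝ᵥ B⁻¹ *ᵥ u
  set z := v ᵥ* B⁻¹
  have hBB : B * B⁻¹ = 1 := mul_nonsing_inv B ((isUnit_iff_isUnit_det B).mp hB)
  have hBw : B * vecMulVec (B⁻¹ *ᵥ u) z = vecMulVec u z := by
    rw [mul_vecMulVec, mulVec_mulVec, hBB, one_mulVec]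
  have huvw : vecMulVec u v * vecMulVec (B⁻¹ *ᵥ u) z = q • vecMulVec u z := by
    rw [vecMulVec_mul_vecMulVec, vecMulVec_smul]
  have hcoeff : c - c / (1 + c * q) - c * (c / (1 + c * q)) * q = 0 := by
    field_simp
    ring
  calc (B + c • vecMulVec u v) * (B⁻¹ - (c / (1 + c * q)) • vecMulVec (B⁻¹ *ᵥ u) z)
      = 1 + (c - c / (1 + c * q) - c * (c / (1 + c * q)) * q) • vecMulVec u z := by
        rw [Matrix.add_mul, Matrix.mul_sub, Matrix.mul_sub, Matrix.mul_smul, Matrix.mul_smul,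
          Matrix.smul_mul, Matrix.smul_mul, hBw, huvw, vecMulVec_mul, hBB]
        module
    _ = 1 := by rw [hcoeff, zero_smul, add_zero]

theorem isUnit_add_smul_vecMulVec {B : Matrix ι ι K} (hB : IsUnit B) {c : K} {u v : ι → K}
    (h : 1 + c * (v ⬝ᵥ B⁻¹ *ᵥ u) ≠ 0) : IsUnit (B + c • vecMulVec u v) :=
  (isUnit_iff_isUnit_det _).mpr <|
    isUnit_det_of_right_inverse (add_smul_vecMulVec_mul_eq_one hB h)

theorem inv_add_smul_vecMulVec {B : Matrix ι ι K} (hB : IsUnit B) {c : K} {u v : ι → K}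
    (h : 1 + c * (v ⬝ᵥ B⁻¹ *ᵥ u) ≠ 0) :
    (B + c • vecMulVec u v)⁻¹ =
      B⁻¹ - (c / (1 + c * (v ⬝ᵥ B⁻¹ *ᵥ u))) • vecMulVec (B⁻¹ *ᵥ u) (v ᵥ* B⁻¹) :=
  inv_eq_right_inv (add_smul_vecMulVec_mul_eq_one hB h)

theorem trace_inv_add_smul_vecMulVec {B : Matrix ι ι K} (hB : IsUnit B) {c : K} {u v : ι → K}
    (h : 1 + c * (v ⬝ᵥ B⁻¹ *ᵥ u) ≠ 0) :
    (B + c • vecMulVec u v)⁻¹.trace =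
      B⁻¹.trace - c * (B⁻¹ *ᵥ u ⬝ᵥ v ᵥ* B⁻¹) / (1 + c * (v ⬝ᵥ B⁻¹ *ᵥ u)) := by
  rw [inv_add_smul_vecMulVec hB h, trace_sub, trace_smul, trace_vecMulVec, smul_eq_mul,
    div_mul_eq_mul_div]

end Matrix

theorem ccrb_nonmaximal_support_general
    {m n : ℕ} (A : Matrix (Fin m) (Fin n) ℝ)
    (hindep : LinearIndependent ℝ (fun j : Fin n => fun k : Fin m => A k j))
    (x : Fin n → ℝ) (σe : ℝ)
    (σx2 : ℝ) (hσx2pos : 0 < σx2)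
    (J : Matrix (Fin n) (Fin n) ℝ)
    (hJ : J = (1 / σx2) • (Aᵀ * A + (2 * m * σe ^ 4 / σx2) • vecMulVec x x)) :
    IsUnit J ∧
    (J⁻¹).trace
      = σx2 * (((Aᵀ * A)⁻¹).trace
          - 2 * m * σe ^ 4 * (∑ i, (((Aᵀ * A)⁻¹ *ᵥ x) i) ^ 2)
            / (σx2 + 2 * m * σe ^ 4 * (x ⬝ᵥ (Aᵀ * A)⁻¹ *ᵥ x))) := by
  set B := Aᵀ * A
  set c := 2 * m * σe ^ 4 / σx2
  have hB : B.PosDef := by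
    simpa using PosDef.conjTranspose_mul_self A (mulVec_injective_iff.mpr hindep)
  have hBsymm : x ᵥ* B⁻¹ = B⁻¹ *ᵥ x := by
    rw [← vecMul_transpose, ← conjTranspose_eq_transpose_of_trivial, hB.inv.isHermitian.eq]
  have hden : 0 < 1 + c * (x ⬝ᵥ B⁻¹ *ᵥ x) := by
    have hq : 0 ≤ x ⬝ᵥ B⁻¹ *ᵥ x := by simpa using hB.inv.posSemidef.dotProduct_mulVec_nonneg x
    have hc : 0 ≤ c := by positivity
    exact add_pos_of_pos_of_nonneg one_pos (mul_nonneg hc hq)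
  have hM := isUnit_add_smul_vecMulVec hB.isUnit hden.ne'
  have hJinv : J * (σx2 • (B + c • vecMulVec x x)⁻¹) = 1 := by
    rw [hJ, Matrix.smul_mul, Matrix.mul_smul, smul_smul, one_div,
      inv_mul_cancel₀ hσx2pos.ne', one_smul, mul_nonsing_inv _ ((isUnit_iff_isUnit_det _).mp hM)]
  refine ⟨(isUnit_iff_isUnit_det _).mpr (isUnit_det_of_right_inverse hJinv), ?_⟩
  rw [inv_eq_right_inv hJinv, trace_smul, smul_eq_mul,
    trace_inv_add_smul_vecMulVec hB.isUnit hden.ne', hBsymm]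
  simp only [c, dotProduct, ← sq]
  field_simp

/-- Theorem 2 (CCRB for nonmaximal support, full-column-rank sensing matrix). If `A` has
linearly independent columns, `σ_x² = σₑ²‖x‖₂² + σₙ² > 0`, and
`J = (1/σ_x²)(AᵀA + 2mσₑ⁴ x xᵀ/σ_x²)`, then `J` is invertible and
`tr(J⁻¹) = σ_x² [tr((AᵀA)⁻¹) − 2mσₑ⁴‖(AᵀA)⁻¹x‖₂² / (σ_x² + 2mσₑ⁴ xᵀ(AᵀA)⁻¹x)]`. -/
theorem ccrb_nonmaximal_support
    {m n : ℕ} (A : Matrix (Fin m) (Fin n) ℝ)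
    (hindep : LinearIndependent ℝ (fun j : Fin n => fun k : Fin m => A k j))
    (x : Fin n → ℝ) (σe σn : ℝ) (hσe : 0 ≤ σe) (hσn : 0 ≤ σn)
    (σx2 : ℝ) (hσx2 : σx2 = σe ^ 2 * ∑ i, x i ^ 2 + σn ^ 2) (hσx2pos : 0 < σx2)
    (J : Matrix (Fin n) (Fin n) ℝ)
    (hJ : J = (1 / σx2) • (Aᵀ * A + (2 * m * σe ^ 4 / σx2) • vecMulVec x x)) :
    IsUnit J ∧
    (J⁻¹).trace
      = σx2 * (((Aᵀ * A)⁻¹).trace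
          - 2 * m * σe ^ 4 * (∑ i, (((Aᵀ * A)⁻¹ *ᵥ x) i) ^ 2)
            / (σx2 + 2 * m * σe ^ 4 * (x ⬝ᵥ (Aᵀ * A)⁻¹ *ᵥ x))) :=
  ccrb_nonmaximal_support_general A hindep x σe σx2 hσx2pos J hJ
end

section
/- (Theorem 3, bounds on d_CCRB.) Let B be an m×s real matrix, ϑ_l ∈ (0,1), ϑ_u > 0 with (1−ϑ_l)‖u‖₂² ≤ ‖Bu‖₂² ≤ (1+ϑ_u)‖u‖₂² for all u ∈ ℝˢ. Let x ∈ ℝˢ be nonzero, σₑ > 0, σₙ ≥ 0, M := BᵀB, σ_x² := σₑ²‖x‖₂² + σₙ², and define d := σ_x² · 2mσₑ⁴‖M⁻¹x‖₂² / (σ_x² + 2mσₑ⁴·xᵀM⁻¹x), c_e := m·s·σₑ²/tr(M), c_n := m·σₙ²/‖x‖₂². Then d ≤ σ_x²·((1+ϑ_u)²/(1−ϑ_l)²)·2c_e/(2(1−ϑ_l)c_e + 1 + ϑ_u + c_n/c_e) and d ≥ σ_x²·((1−ϑ_l)²/(1+ϑ_u)²)·2c_e/(2(1+ϑ_u)c_e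 + 1 − ϑ_l + c_n/c_e). -/
open Matrix


/-- Key real-arithmetic inequalities for Theorem 3. -/
lemma dCCRB_core (p r σe σn a q L mR sR t S ce cn : ℝ)
    (hp : 0 < p) (hpr : p ≤ r) (hr : 0 < r)
    (he : 0 < σe) (hn : 0 ≤ σn) (ha : 0 < a) (hq0 : 0 < q) (hL0 : 0 ≤ L)
    (hLq : p ^ 2 * L ≤ a) (hqa : a ≤ r * q) (hLa : a ≤ r ^ 2 * L) (hpq : p * q ≤ a)
    (hm : 1 ≤ mR) (hs : 1 ≤ sR) (ht1 : p * sR ≤ t) (ht2 : t ≤ r * sR)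
    (hS : S = σe ^ 2 * a + σn ^ 2) (hce : ce = mR * sR * σe ^ 2 / t)
    (hcn : cn = mR * σn ^ 2 / a) :
    S * (2 * mR * σe ^ 4 * L) / (S + 2 * mR * σe ^ 4 * q)
        ≤ S * (r ^ 2 / p ^ 2) * (2 * ce / (2 * p * ce + r + cn / ce)) ∧
    S * (p ^ 2 / r ^ 2) * (2 * ce / (2 * r * ce + p + cn / ce))
        ≤ S * (2 * mR * σe ^ 4 * L) / (S + 2 * mR * σe ^ 4 * q) := by
  have hm0 : (0:ℝ) < mR := lt_of_lt_of_le one_pos hm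
  have hs0 : (0:ℝ) < sR := lt_of_lt_of_le one_pos hs
  have ht0 : (0:ℝ) < t := lt_of_lt_of_le (by positivity) ht1
  have hS0 : 0 < S := by rw [hS]; positivity
  have hce0 : 0 < ce := by rw [hce]; positivity
  have hcn0 : 0 ≤ cn := by rw [hcn]; positivity
  have hK : (0:ℝ) < 2 * mR * σe ^ 4 := by positivity
  have hden : 0 < S + 2 * mR * σe ^ 4 * q := by positivity
  have hcnce : cn / ce = σn ^ 2 * t / (a * sR * σe ^ 2) := by
    rw [hcn, hce]
    field_simp
  have hD0 : (0:ℝ) < t * (a * sR * σe ^ 2) := by positivity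
  have htsq : t ^ 2 ≤ (r * sR) ^ 2 := pow_le_pow_left₀ ht0.le ht2 2
  have htsq' : (p * sR) ^ 2 ≤ t ^ 2 := pow_le_pow_left₀ (by positivity) ht1 2
  -- first key inequality
  have hkey1 : 2 * mR * σe ^ 4 * a * (2 * p * ce + r + cn / ce)
      ≤ 2 * ce * (r ^ 2 * S + r * (2 * mR * σe ^ 4 * a)) := by
    rw [hcnce, hce, hS]
    have eL : 2 * mR * σe ^ 4 * a *
        (2 * p * (mR * sR * σe ^ 2 / t) + r + σn ^ 2 * t / (a * sR * σe ^ 2))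
        = (2 * mR * σe ^ 4 * a * (2 * p * (mR * sR * σe ^ 2) * (a * sR * σe ^ 2)
            + r * (t * (a * sR * σe ^ 2)) + σn ^ 2 * t ^ 2)) / (t * (a * sR * σe ^ 2)) := by
      field_simp
    have eR : 2 * (mR * sR * σe ^ 2 / t) *
        (r ^ 2 * (σe ^ 2 * a + σn ^ 2) + r * (2 * mR * σe ^ 4 * a))
        = (2 * (mR * sR * σe ^ 2) * (r ^ 2 * (σe ^ 2 * a + σn ^ 2)
            + r * (2 * mR * σe ^ 4 * a)) * (a * sR * σe ^ 2)) / (t * (a * sR * σe ^ 2)) := by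
      field_simp
    rw [eL, eR, div_le_div_iff₀ hD0 hD0]
    have h1 : 2 * mR * σe ^ 4 * a * (2 * p * (mR * sR * σe ^ 2) * (a * sR * σe ^ 2))
        ≤ 2 * (mR * sR * σe ^ 2) * (r * (2 * mR * σe ^ 4 * a)) * (a * sR * σe ^ 2) := by
      calc 2 * mR * σe ^ 4 * a * (2 * p * (mR * sR * σe ^ 2) * (a * sR * σe ^ 2))
          = (2 * mR * σe ^ 4 * a * (2 * (mR * sR * σe ^ 2)) * (a * sR * σe ^ 2)) * p := by ring
        _ ≤ (2 * mR * σe ^ 4 * a * (2 * (mR * sR * σe ^ 2)) * (a * sR * σe ^ 2)) * r :=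
            mul_le_mul_of_nonneg_left hpr (by positivity)
        _ = 2 * (mR * sR * σe ^ 2) * (r * (2 * mR * σe ^ 4 * a)) * (a * sR * σe ^ 2) := by ring
    have h2 : 2 * mR * σe ^ 4 * a * (r * (t * (a * sR * σe ^ 2)))
        ≤ 2 * (mR * sR * σe ^ 2) * (r ^ 2 * (σe ^ 2 * a)) * (a * sR * σe ^ 2) := by
      calc 2 * mR * σe ^ 4 * a * (r * (t * (a * sR * σe ^ 2)))
          = (2 * mR * σe ^ 4 * a * r * (a * sR * σe ^ 2)) * t := by ring
        _ ≤ (2 * mR * σe ^ 4 * a * r * (a * sR * σe ^ 2)) * (r * sR) :=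
            mul_le_mul_of_nonneg_left ht2 (by positivity)
        _ = 2 * (mR * sR * σe ^ 2) * (r ^ 2 * (σe ^ 2 * a)) * (a * sR * σe ^ 2) := by ring
    have h3 : 2 * mR * σe ^ 4 * a * (σn ^ 2 * t ^ 2)
        ≤ 2 * (mR * sR * σe ^ 2) * (r ^ 2 * σn ^ 2) * (a * sR * σe ^ 2) := by
      calc 2 * mR * σe ^ 4 * a * (σn ^ 2 * t ^ 2)
          = (2 * mR * σe ^ 4 * a * σn ^ 2) * t ^ 2 := by ring
        _ ≤ (2 * mR * σe ^ 4 * a * σn ^ 2) * (r * sR) ^ 2 :=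
            mul_le_mul_of_nonneg_left htsq (by positivity)
        _ = 2 * (mR * sR * σe ^ 2) * (r ^ 2 * σn ^ 2) * (a * sR * σe ^ 2) := by ring
    exact mul_le_mul_of_nonneg_right (by linarith) hD0.le
  -- second key inequality
  have hkey2 : 2 * ce * (p ^ 2 * S + p * (2 * mR * σe ^ 4 * a))
      ≤ 2 * mR * σe ^ 4 * a * (2 * r * ce + p + cn / ce) := by
    rw [hcnce, hce, hS]
    have eL : 2 * (mR * sR * σe ^ 2 / t) *
        (p ^ 2 * (σe ^ 2 * a + σn ^ 2) + p * (2 * mR * σe ^ 4 * a))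
        = (2 * (mR * sR * σe ^ 2) * (p ^ 2 * (σe ^ 2 * a + σn ^ 2)
            + p * (2 * mR * σe ^ 4 * a)) * (a * sR * σe ^ 2)) / (t * (a * sR * σe ^ 2)) := by
      field_simp
    have eR : 2 * mR * σe ^ 4 * a *
        (2 * r * (mR * sR * σe ^ 2 / t) + p + σn ^ 2 * t / (a * sR * σe ^ 2))
        = (2 * mR * σe ^ 4 * a * (2 * r * (mR * sR * σe ^ 2) * (a * sR * σe ^ 2)
            + p * (t * (a * sR * σe ^ 2)) + σn ^ 2 * t ^ 2)) / (t * (a * sR * σe ^ 2)) := by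
      field_simp
    rw [eL, eR, div_le_div_iff₀ hD0 hD0]
    have q1 : 2 * (mR * sR * σe ^ 2) * (p * (2 * mR * σe ^ 4 * a)) * (a * sR * σe ^ 2)
        ≤ 2 * mR * σe ^ 4 * a * (2 * r * (mR * sR * σe ^ 2) * (a * sR * σe ^ 2)) := by
      calc 2 * (mR * sR * σe ^ 2) * (p * (2 * mR * σe ^ 4 * a)) * (a * sR * σe ^ 2)
          = (2 * (mR * sR * σe ^ 2) * (2 * mR * σe ^ 4 * a) * (a * sR * σe ^ 2)) * p := by ring
        _ ≤ (2 * (mR * sR * σe ^ 2) * (2 * mR * σe ^ 4 * a) * (a * sR * σe ^ 2)) * r :=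
            mul_le_mul_of_nonneg_left hpr (by positivity)
        _ = 2 * mR * σe ^ 4 * a * (2 * r * (mR * sR * σe ^ 2) * (a * sR * σe ^ 2)) := by ring
    have q2 : 2 * (mR * sR * σe ^ 2) * (p ^ 2 * (σe ^ 2 * a)) * (a * sR * σe ^ 2)
        ≤ 2 * mR * σe ^ 4 * a * (p * (t * (a * sR * σe ^ 2))) := by
      calc 2 * (mR * sR * σe ^ 2) * (p ^ 2 * (σe ^ 2 * a)) * (a * sR * σe ^ 2)
          = (2 * mR * σe ^ 4 * a * p * (a * sR * σe ^ 2)) * (p * sR) := by ring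
        _ ≤ (2 * mR * σe ^ 4 * a * p * (a * sR * σe ^ 2)) * t :=
            mul_le_mul_of_nonneg_left ht1 (by positivity)
        _ = 2 * mR * σe ^ 4 * a * (p * (t * (a * sR * σe ^ 2))) := by ring
    have q3 : 2 * (mR * sR * σe ^ 2) * (p ^ 2 * σn ^ 2) * (a * sR * σe ^ 2)
        ≤ 2 * mR * σe ^ 4 * a * (σn ^ 2 * t ^ 2) := by
      calc 2 * (mR * sR * σe ^ 2) * (p ^ 2 * σn ^ 2) * (a * sR * σe ^ 2)
          = (2 * mR * σe ^ 4 * a * σn ^ 2) * (p * sR) ^ 2 := by ring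
        _ ≤ (2 * mR * σe ^ 4 * a * σn ^ 2) * t ^ 2 :=
            mul_le_mul_of_nonneg_left htsq' (by positivity)
        _ = 2 * mR * σe ^ 4 * a * (σn ^ 2 * t ^ 2) := by ring
    exact mul_le_mul_of_nonneg_right (by linarith) hD0.le
  have hDc : 0 < 2 * p * ce + r + cn / ce := by
    have h := div_nonneg hcn0 hce0.le
    have h2 := mul_pos hp hce0
    linarith
  have hDc' : 0 < 2 * r * ce + p + cn / ce := by
    have h := div_nonneg hcn0 hce0.le
    have h2 := mul_pos hr hce0
    linarith
  constructor
  · have eR : S * (r ^ 2 / p ^ 2) * (2 * ce / (2 * p * ce + r + cn / ce))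
        = S * (r ^ 2 * (2 * ce)) / (p ^ 2 * (2 * p * ce + r + cn / ce)) := by
      rw [eq_div_iff (by positivity : p ^ 2 * (2 * p * ce + r + cn / ce) ≠ 0)]
      field_simp
    rw [eR, div_le_div_iff₀ hden (by positivity)]
    have c1 : 2 * mR * σe ^ 4 * (p ^ 2 * L) ≤ 2 * mR * σe ^ 4 * a :=
      mul_le_mul_of_nonneg_left hLq hK.le
    have c3 : r * (2 * mR * σe ^ 4 * a) ≤ r ^ 2 * (2 * mR * σe ^ 4 * q) := by
      calc r * (2 * mR * σe ^ 4 * a) = (r * (2 * mR * σe ^ 4)) * a := by ring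
        _ ≤ (r * (2 * mR * σe ^ 4)) * (r * q) :=
            mul_le_mul_of_nonneg_left hqa (by positivity)
        _ = r ^ 2 * (2 * mR * σe ^ 4 * q) := by ring
    calc S * (2 * mR * σe ^ 4 * L) * (p ^ 2 * (2 * p * ce + r + cn / ce))
        = (S * (2 * p * ce + r + cn / ce)) * (2 * mR * σe ^ 4 * (p ^ 2 * L)) := by ring
      _ ≤ (S * (2 * p * ce + r + cn / ce)) * (2 * mR * σe ^ 4 * a) :=
          mul_le_mul_of_nonneg_left c1 (mul_nonneg hS0.le hDc.le)
      _ = S * (2 * mR * σe ^ 4 * a * (2 * p * ce + r + cn / ce)) := by ring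
      _ ≤ S * (2 * ce * (r ^ 2 * S + r * (2 * mR * σe ^ 4 * a))) :=
          mul_le_mul_of_nonneg_left hkey1 hS0.le
      _ = (S * (2 * ce)) * (r ^ 2 * S + r * (2 * mR * σe ^ 4 * a)) := by ring
      _ ≤ (S * (2 * ce)) * (r ^ 2 * S + r ^ 2 * (2 * mR * σe ^ 4 * q)) :=
          mul_le_mul_of_nonneg_left (by linarith) (mul_nonneg hS0.le (by linarith))
      _ = S * (r ^ 2 * (2 * ce)) * (S + 2 * mR * σe ^ 4 * q) := by ring
  · have eR : S * (p ^ 2 / r ^ 2) * (2 * ce / (2 * r * ce + p + cn / ce))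
        = S * (p ^ 2 * (2 * ce)) / (r ^ 2 * (2 * r * ce + p + cn / ce)) := by
      rw [eq_div_iff (by positivity)]
      field_simp
    rw [eR, div_le_div_iff₀ (by positivity) hden]
    have c1 : 2 * mR * σe ^ 4 * a ≤ 2 * mR * σe ^ 4 * (r ^ 2 * L) :=
      mul_le_mul_of_nonneg_left hLa hK.le
    have c3 : p ^ 2 * (2 * mR * σe ^ 4 * q) ≤ p * (2 * mR * σe ^ 4 * a) := by
      calc p ^ 2 * (2 * mR * σe ^ 4 * q) = (p * (2 * mR * σe ^ 4)) * (p * q) := by ring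
        _ ≤ (p * (2 * mR * σe ^ 4)) * a := mul_le_mul_of_nonneg_left hpq (by positivity)
        _ = p * (2 * mR * σe ^ 4 * a) := by ring
    calc S * (p ^ 2 * (2 * ce)) * (S + 2 * mR * σe ^ 4 * q)
        = (S * (2 * ce)) * (p ^ 2 * S + p ^ 2 * (2 * mR * σe ^ 4 * q)) := by ring
      _ ≤ (S * (2 * ce)) * (p ^ 2 * S + p * (2 * mR * σe ^ 4 * a)) :=
          mul_le_mul_of_nonneg_left (by linarith) (mul_nonneg hS0.le (by linarith))
      _ = S * (2 * ce * (p ^ 2 * S + p * (2 * mR * σe ^ 4 * a))) := by ring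
      _ ≤ S * (2 * mR * σe ^ 4 * a * (2 * r * ce + p + cn / ce)) :=
          mul_le_mul_of_nonneg_left hkey2 hS0.le
      _ = (S * (2 * r * ce + p + cn / ce)) * (2 * mR * σe ^ 4 * a) := by ring
      _ ≤ (S * (2 * r * ce + p + cn / ce)) * (2 * mR * σe ^ 4 * (r ^ 2 * L)) :=
          mul_le_mul_of_nonneg_left c1 (mul_nonneg hS0.le hDc'.le)
      _ = S * (2 * mR * σe ^ 4 * L) * (r ^ 2 * (2 * r * ce + p + cn / ce)) := by ring


/-- Spectral/trace facts derived from the RIP-type assumption. -/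
lemma dCCRB_facts
    {m s : ℕ} (B : Matrix (Fin m) (Fin s) ℝ)
    (ϑl ϑu : ℝ) (hϑl : ϑl ∈ Set.Ioo (0 : ℝ) 1) (hϑu : 0 < ϑu)
    (hRIP : ∀ u : Fin s → ℝ,
      (1 - ϑl) * ∑ i, u i ^ 2 ≤ ∑ k, ((B *ᵥ u) k) ^ 2 ∧
      ∑ k, ((B *ᵥ u) k) ^ 2 ≤ (1 + ϑu) * ∑ i, u i ^ 2)
    (x : Fin s → ℝ) (hx : x ≠ 0)
    (M : Matrix (Fin s) (Fin s) ℝ) (hM : M = Bᵀ * B) :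
    0 < ∑ i, x i ^ 2 ∧ 0 < x ⬝ᵥ M⁻¹ *ᵥ x ∧ (0:ℝ) ≤ ∑ i, ((M⁻¹ *ᵥ x) i) ^ 2 ∧
    (1 - ϑl) ^ 2 * ∑ i, ((M⁻¹ *ᵥ x) i) ^ 2 ≤ ∑ i, x i ^ 2 ∧
    ∑ i, x i ^ 2 ≤ (1 + ϑu) * (x ⬝ᵥ M⁻¹ *ᵥ x) ∧
    ∑ i, x i ^ 2 ≤ (1 + ϑu) ^ 2 * ∑ i, ((M⁻¹ *ᵥ x) i) ^ 2 ∧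
    (1 - ϑl) * (x ⬝ᵥ M⁻¹ *ᵥ x) ≤ ∑ i, x i ^ 2 ∧
    (1 - ϑl) * s ≤ M.trace ∧ M.trace ≤ (1 + ϑu) * s ∧
    1 ≤ (s : ℝ) ∧ 1 ≤ (m : ℝ) := by
  have hp : 0 < 1 - ϑl := by have := hϑl.2; linarith
  have hr : 0 < 1 + ϑu := by linarith
  -- basic dot-product identity
  have hdot : ∀ u w : Fin s → ℝ, u ⬝ᵥ (M *ᵥ w) = (B *ᵥ u) ⬝ᵥ (B *ᵥ w) := by
    intro u w
    rw [hM, ← Matrix.mulVec_mulVec, Matrix.dotProduct_mulVec, Matrix.vecMul_transpose]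
  have hsum : ∀ {n : ℕ} (u : Fin n → ℝ), u ⬝ᵥ u = ∑ k, u k ^ 2 := by
    intro n u; simp [dotProduct, sq]
  -- a = ∑ x i ^ 2 > 0
  obtain ⟨i0, hi0⟩ : ∃ i, x i ≠ 0 := Function.ne_iff.mp hx
  have ha : 0 < ∑ i, x i ^ 2 :=
    Finset.sum_pos' (fun j _ => sq_nonneg _) ⟨i0, Finset.mem_univ i0, by positivity⟩
  -- invertibility of M
  have hdet : IsUnit M.det := by
    rw [isUnit_iff_ne_zero]
    intro h
    obtain ⟨v, hv0, hv⟩ := Matrix.exists_mulVec_eq_zero_iff.mpr h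
    have h1 : (1 - ϑl) * ∑ i, v i ^ 2 ≤ ∑ k, ((B *ᵥ v) k) ^ 2 := (hRIP v).1
    have h2 : v ⬝ᵥ (M *ᵥ v) = 0 := by rw [hv]; simp
    rw [hdot v v, hsum] at h2
    obtain ⟨j0, hj0⟩ : ∃ j, v j ≠ 0 := Function.ne_iff.mp hv0
    have hv2 : 0 < ∑ i, v i ^ 2 :=
      Finset.sum_pos' (fun j _ => sq_nonneg _) ⟨j0, Finset.mem_univ j0, by positivity⟩
    nlinarith
  have hxv : M *ᵥ (M⁻¹ *ᵥ x) = x := by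
    rw [Matrix.mulVec_mulVec, Matrix.mul_nonsing_inv _ hdet, Matrix.one_mulVec]
  set v : Fin s → ℝ := M⁻¹ *ᵥ x with hvdef
  -- q and L
  have hqid : x ⬝ᵥ M⁻¹ *ᵥ x = ∑ k, ((B *ᵥ v) k) ^ 2 := by
    calc x ⬝ᵥ M⁻¹ *ᵥ x = v ⬝ᵥ x := dotProduct_comm _ _
      _ = v ⬝ᵥ (M *ᵥ v) := by rw [hxv]
      _ = (B *ᵥ v) ⬝ᵥ (B *ᵥ v) := hdot v v
      _ = ∑ k, ((B *ᵥ v) k) ^ 2 := hsum _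
  have hripv := hRIP v
  -- a = (B x)·(B v)
  have hax : ∑ i, x i ^ 2 = (B *ᵥ x) ⬝ᵥ (B *ᵥ v) := by
    calc ∑ i, x i ^ 2 = x ⬝ᵥ x := (hsum x).symm
      _ = x ⬝ᵥ (M *ᵥ v) := by rw [hxv]
      _ = (B *ᵥ x) ⬝ᵥ (B *ᵥ v) := hdot x v
  -- Cauchy-Schwarz 1 : ((Bx)·(Bv))² ≤ (∑ (Bx)²)(∑ (Bv)²)
  have hcs1 : ((B *ᵥ x) ⬝ᵥ (B *ᵥ v)) ^ 2 ≤ (∑ k, ((B *ᵥ x) k) ^ 2) * ∑ k, ((B *ᵥ v) k) ^ 2 :=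
    Finset.sum_mul_sq_le_sq_mul_sq Finset.univ _ _
  -- Cauchy-Schwarz 2 : (x·v)² ≤ a * L
  have hcs2 : (x ⬝ᵥ v) ^ 2 ≤ (∑ i, x i ^ 2) * ∑ i, v i ^ 2 :=
    Finset.sum_mul_sq_le_sq_mul_sq Finset.univ _ _
  have hripx := hRIP x
  -- a ≤ r * q
  have hqa : ∑ i, x i ^ 2 ≤ (1 + ϑu) * (x ⬝ᵥ M⁻¹ *ᵥ x) := by
    rw [hqid]
    nlinarith [hripx.2, hripv.1, hripv.2, ha,
      Finset.sum_nonneg (fun k (_ : k ∈ Finset.univ) => sq_nonneg ((B *ᵥ v) k))]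
  -- q > 0
  have hq0 : 0 < x ⬝ᵥ M⁻¹ *ᵥ x := by nlinarith
  -- p * q ≤ a
  have hpq : (1 - ϑl) * (x ⬝ᵥ M⁻¹ *ᵥ x) ≤ ∑ i, x i ^ 2 := by
    have hxvq : x ⬝ᵥ v = x ⬝ᵥ M⁻¹ *ᵥ x := rfl
    rw [hxvq, hqid] at hcs2
    rw [hqid]
    rw [hqid] at hq0
    nlinarith [mul_le_mul_of_nonneg_left hripv.1 ha.le,
      mul_le_mul_of_nonneg_left hcs2 hp.le, hq0]
  -- p² L ≤ a  and  a ≤ r² L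
  have hL0 : 0 ≤ ∑ i, v i ^ 2 := Finset.sum_nonneg fun k _ => sq_nonneg _
  have hLq : (1 - ϑl) ^ 2 * ∑ i, v i ^ 2 ≤ ∑ i, x i ^ 2 := by
    nlinarith [hripv.1, hpq, hqid]
  have hLa : ∑ i, x i ^ 2 ≤ (1 + ϑu) ^ 2 * ∑ i, v i ^ 2 := by
    nlinarith [hripv.2, hqa, hqid, hq0]
  -- trace bounds
  have hdiag : ∀ i, (1 - ϑl) ≤ M i i ∧ M i i ≤ (1 + ϑu) := by
    intro i
    have h1 := hRIP (Pi.single i (1:ℝ) : Fin s → ℝ)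
    have e1 : ∑ j : Fin s, (Pi.single i (1:ℝ) : Fin s → ℝ) j ^ 2 = 1 := by
      rw [Finset.sum_eq_single i]
      · simp
      · intro b _ hb; simp [Pi.single_apply, hb]
      · simp
    have e2 : ∑ k, ((B *ᵥ (Pi.single i (1:ℝ) : Fin s → ℝ)) k) ^ 2 = M i i := by
      rw [hM]
      simp [Matrix.mulVec_single, Matrix.mul_apply, sq]
    rw [e1, e2] at h1
    simpa using h1
  have htr1 : (1 - ϑl) * s ≤ M.trace := by
    have : M.trace = ∑ i, M i i := rfl
    rw [this]
    calc (1 - ϑl) * s = ∑ _i : Fin s, (1 - ϑl) := by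
          rw [Finset.sum_const, Finset.card_univ, Fintype.card_fin, nsmul_eq_mul]; ring
      _ ≤ ∑ i, M i i := Finset.sum_le_sum fun i _ => (hdiag i).1
  have htr2 : M.trace ≤ (1 + ϑu) * s := by
    have : M.trace = ∑ i, M i i := rfl
    rw [this]
    calc ∑ i, M i i ≤ ∑ _i : Fin s, (1 + ϑu) := Finset.sum_le_sum fun i _ => (hdiag i).2
      _ = (1 + ϑu) * s := by
          rw [Finset.sum_const, Finset.card_univ, Fintype.card_fin, nsmul_eq_mul]; ring
  -- m, s ≥ 1
  have hs1 : 1 ≤ (s : ℝ) := by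
    have : s ≠ 0 := by rintro rfl; exact i0.elim0
    exact_mod_cast Nat.one_le_iff_ne_zero.mpr this
  have hm1 : 1 ≤ (m : ℝ) := by
    have : m ≠ 0 := by
      rintro rfl
      have h1 := hripx.1
      simp at h1
      nlinarith
    exact_mod_cast Nat.one_le_iff_ne_zero.mpr this
  exact ⟨ha, hq0, hL0, hLq, hqa, hLa, hpq, htr1, htr2, hs1, hm1⟩

/-- Theorem 3 (bounds on `d_CCRB`). Under the restricted-isometry-type assumption
`(1−ϑ_l)‖u‖₂² ≤ ‖Bu‖₂² ≤ (1+ϑ_u)‖u‖₂²`, the correction term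
`d = σ_x² · 2mσₑ⁴‖M⁻¹x‖₂² / (σ_x² + 2mσₑ⁴ xᵀM⁻¹x)` (with `M = BᵀB`) satisfies the two-sided
bound of the paper in terms of the perturbation level `c_e = msσₑ²/tr(M)` and the
measurement-noise level `c_n = mσₙ²/‖x‖₂²`. -/
theorem dCCRB_bounds
    {m s : ℕ} (B : Matrix (Fin m) (Fin s) ℝ)
    (ϑl ϑu : ℝ) (hϑl : ϑl ∈ Set.Ioo (0 : ℝ) 1) (hϑu : 0 < ϑu)
    (hRIP : ∀ u : Fin s → ℝ,
      (1 - ϑl) * ∑ i, u i ^ 2 ≤ ∑ k, ((B *ᵥ u) k) ^ 2 ∧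
      ∑ k, ((B *ᵥ u) k) ^ 2 ≤ (1 + ϑu) * ∑ i, u i ^ 2)
    (x : Fin s → ℝ) (hx : x ≠ 0)
    (σe σn : ℝ) (hσe : 0 < σe) (hσn : 0 ≤ σn)
    (M : Matrix (Fin s) (Fin s) ℝ) (hM : M = Bᵀ * B)
    (σx2 : ℝ) (hσx2 : σx2 = σe ^ 2 * ∑ i, x i ^ 2 + σn ^ 2)
    (d ce cn : ℝ)
    (hd : d = σx2 * (2 * m * σe ^ 4 * ∑ i, ((M⁻¹ *ᵥ x) i) ^ 2)
            / (σx2 + 2 * m * σe ^ 4 * (x ⬝ᵥ M⁻¹ *ᵥ x)))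
    (hce : ce = m * s * σe ^ 2 / M.trace)
    (hcn : cn = m * σn ^ 2 / ∑ i, x i ^ 2) :
    d ≤ σx2 * ((1 + ϑu) ^ 2 / (1 - ϑl) ^ 2)
          * (2 * ce / (2 * (1 - ϑl) * ce + 1 + ϑu + cn / ce)) ∧
    σx2 * ((1 - ϑl) ^ 2 / (1 + ϑu) ^ 2)
          * (2 * ce / (2 * (1 + ϑu) * ce + 1 - ϑl + cn / ce)) ≤ d := by
  obtain ⟨ha, hq0, hL0, hLq, hqa, hLa, hpq, htr1, htr2, hs1, hm1⟩ :=
    dCCRB_facts B ϑl ϑu hϑl hϑu hRIP x hx M hM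
  have hp : 0 < 1 - ϑl := by have := hϑl.2; linarith
  have hr : 0 < 1 + ϑu := by linarith
  subst hd
  have e1 : 2 * (1 - ϑl) * ce + 1 + ϑu + cn / ce
      = 2 * (1 - ϑl) * ce + (1 + ϑu) + cn / ce := by ring
  have e2 : 2 * (1 + ϑu) * ce + 1 - ϑl + cn / ce
      = 2 * (1 + ϑu) * ce + (1 - ϑl) + cn / ce := by ring
  rw [e1, e2]
  exact dCCRB_core (1 - ϑl) (1 + ϑu) σe σn (∑ i, x i ^ 2) (x ⬝ᵥ M⁻¹ *ᵥ x)
    (∑ i, ((M⁻¹ *ᵥ x) i) ^ 2) m s M.trace σx2 ce cn hp (by have h1 := hϑl.1; linarith) hr hσe hσn ha hq0 hL0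
    hLq hqa hLa hpq hm1 hs1 htr1 htr2 hσx2 hce hcn
end

section
/- (Theorem 3, bounds on γ_CCRB.) Let B be an m×s real matrix, ϑ_l ∈ (0,1), ϑ_u > 0 with (1−ϑ_l)‖u‖₂² ≤ ‖Bu‖₂² ≤ (1+ϑ_u)‖u‖₂² for all u ∈ ℝˢ. Let x ∈ ℝˢ be nonzero, σₑ > 0, σₙ ≥ 0, M := BᵀB, σ_x² := σₑ²‖x‖₂² + σₙ², d := σ_x² · 2mσₑ⁴‖M⁻¹x‖₂² / (σ_x² + 2mσₑ⁴·xᵀM⁻¹x), c_e := m·s·σₑ²/tr(M), c_n := m·σₙ²/‖x‖₂², and γ := d/(σ_x²·tr(M⁻¹)). Then γ ≤ (1/s)·((1+ϑ_u)³/(1−ϑ_l)²)·2c_e/(2(1−ϑ_l)c_e + 1 + ϑ_u + c_n/c_e) and γ ≥ (1/s)·((1−ϑ_l)³/(1+ϑ_u)²)·2c_e/(2(1+ϑ_u)c_e + 1 − ϑ_l + c_n/c_e). -/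
open Matrix

set_option maxHeartbeats 2000000 in
private lemma scalar_bounds (a b sR X E v n P Q T1 T ce cn γ : ℝ)
    (ha : 0 < a) (hb : 0 < b) (hs : 0 < sR) (hX : 0 < X) (hE : 0 < E)
    (hv : 0 < v) (hn : 0 ≤ n)
    (hP2 : P ≤ X / a ^ 2)
    (hP1 : X / b ^ 2 ≤ P)
    (hQ1 : X / b ≤ Q) (hQ2 : Q ≤ X / a)
    (hT11 : sR / b ≤ T1) (hT12 : T1 ≤ sR / a)
    (hTl : sR * a ≤ T) (hTu : T ≤ sR * b)
    (hce : ce = sR * E / T) (hcnv : cn * (X * v) = E * n)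
    (hγ : γ = 2 * E * v * P / ((v * X + n + 2 * E * v * Q) * T1)) :
    γ ≤ (1 / sR) * (b ^ 3 / a ^ 2) * (2 * ce / (2 * a * ce + b + cn / ce)) ∧
    (1 / sR) * (a ^ 3 / b ^ 2) * (2 * ce / (2 * b * ce + a + cn / ce)) ≤ γ := by
  have hT0 : 0 < T := lt_of_lt_of_le (by positivity) hTl
  have hce0 : 0 < ce := by rw [hce]; positivity
  have hcn0 : 0 ≤ cn := by
    have : cn = E * n / (X * v) := by field_simp at hcnv ⊢; linarith [hcnv]
    rw [this]; positivity
  have hT10 : 0 < T1 := lt_of_lt_of_le (by positivity) hT11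
  have hQ0 : 0 < Q := lt_of_lt_of_le (by positivity) hQ1
  have hP0 : 0 < P := lt_of_lt_of_le (by positivity) hP1
  have hEub : E ≤ b * ce := by
    rw [hce, mul_div_assoc', le_div_iff₀ hT0]; nlinarith
  have hElb : a * ce ≤ E := by
    rw [hce, mul_div_assoc', div_le_iff₀ hT0]; nlinarith
  have hnlb : cn * X * v / (b * ce) ≤ n := by
    rw [div_le_iff₀ (by positivity)]
    nlinarith [mul_le_mul_of_nonneg_right hEub hn]
  have hnub : n ≤ cn * X * v / (a * ce) := by
    rw [le_div_iff₀ (by positivity)]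
    nlinarith [mul_le_mul_of_nonneg_right hElb hn]
  constructor
  · have h1 : γ ≤ 2 * (b * ce) * v * (X / a ^ 2) /
        ((v * X + cn * X * v / (b * ce) + 2 * (a * ce) * v * (X / b)) * (sR / b)) := by
      rw [hγ]
      gcongr <;> positivity
    refine h1.trans_eq ?_
    have h2 : (2 * a * ce + b + cn / ce) ≠ 0 := by positivity
    field_simp
    ring
  · have h1 : 2 * (a * ce) * v * (X / b ^ 2) /
        ((v * X + cn * X * v / (a * ce) + 2 * (b * ce) * v * (X / a)) * (sR / a)) ≤ γ := by
      rw [hγ]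
      gcongr <;> positivity
    refine le_trans (le_of_eq ?_) h1
    have h2 : (2 * b * ce + a + cn / ce) ≠ 0 := by positivity
    field_simp
    ring

set_option maxHeartbeats 2000000 in
/-- Theorem 3 (bounds on `γ_CCRB`). Under the restricted-isometry-type assumption
`(1−ϑ_l)‖u‖₂² ≤ ‖Bu‖₂² ≤ (1+ϑ_u)‖u‖₂²`, the ratio `γ = d/(σ_x² tr(M⁻¹))` of the correction
term to the oracle term of the CCRB (with `M = BᵀB`) satisfies the two-sided `1/s` bound of
the paper in terms of `c_e = msσₑ²/tr(M)` and `c_n = mσₙ²/‖x‖₂²`. -/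
theorem gammaCCRB_bounds
    {m s : ℕ} (B : Matrix (Fin m) (Fin s) ℝ)
    (ϑl ϑu : ℝ) (hϑl : ϑl ∈ Set.Ioo (0 : ℝ) 1) (hϑu : 0 < ϑu)
    (hRIP : ∀ u : Fin s → ℝ,
      (1 - ϑl) * ∑ i, u i ^ 2 ≤ ∑ k, ((B *ᵥ u) k) ^ 2 ∧
      ∑ k, ((B *ᵥ u) k) ^ 2 ≤ (1 + ϑu) * ∑ i, u i ^ 2)
    (x : Fin s → ℝ) (hx : x ≠ 0)
    (σe σn : ℝ) (hσe : 0 < σe) (hσn : 0 ≤ σn)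
    (M : Matrix (Fin s) (Fin s) ℝ) (hM : M = Bᵀ * B)
    (σx2 : ℝ) (hσx2 : σx2 = σe ^ 2 * ∑ i, x i ^ 2 + σn ^ 2)
    (d ce cn γ : ℝ)
    (hd : d = σx2 * (2 * m * σe ^ 4 * ∑ i, ((M⁻¹ *ᵥ x) i) ^ 2)
            / (σx2 + 2 * m * σe ^ 4 * (x ⬝ᵥ M⁻¹ *ᵥ x)))
    (hce : ce = m * s * σe ^ 2 / M.trace)
    (hcn : cn = m * σn ^ 2 / ∑ i, x i ^ 2)
    (hγ : γ = d / (σx2 * (M⁻¹).trace)) :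
    γ ≤ (1 / s) * ((1 + ϑu) ^ 3 / (1 - ϑl) ^ 2)
          * (2 * ce / (2 * (1 - ϑl) * ce + 1 + ϑu + cn / ce)) ∧
    (1 / s) * ((1 - ϑl) ^ 3 / (1 + ϑu) ^ 2)
          * (2 * ce / (2 * (1 + ϑu) * ce + 1 - ϑl + cn / ce)) ≤ γ := by
  obtain ⟨hϑl0, hϑl1⟩ := hϑl
  have ha : (0:ℝ) < 1 - ϑl := by linarith
  have hb : (0:ℝ) < 1 + ϑu := by linarith
  have sumsq_pos : ∀ v : Fin s → ℝ, v ≠ 0 → 0 < ∑ i, v i ^ 2 := by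
    intro v hv
    obtain ⟨i, hi⟩ := Function.ne_iff.mp hv
    exact Finset.sum_pos' (fun j _ => sq_nonneg _)
      ⟨i, Finset.mem_univ i,
        lt_of_le_of_ne (sq_nonneg _) (Ne.symm (pow_ne_zero 2 hi))⟩
  have hX : 0 < ∑ i, x i ^ 2 := sumsq_pos x hx
  have hs : 0 < (s:ℝ) := by
    have hs0 : s ≠ 0 := by
      rintro rfl
      exact hx (funext fun i => i.elim0)
    exact_mod_cast Nat.pos_of_ne_zero hs0
  have hm : 0 < (m:ℝ) := by
    have hm0 : m ≠ 0 := by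
      rintro rfl
      have h := (hRIP x).1
      simp only [Finset.univ_eq_empty, Finset.sum_empty] at h
      nlinarith
    exact_mod_cast Nat.pos_of_ne_zero hm0
  have quad : ∀ u : Fin s → ℝ, u ⬝ᵥ (M *ᵥ u) = ∑ k, ((B *ᵥ u) k) ^ 2 := by
    intro u
    rw [hM, ← Matrix.mulVec_mulVec, Matrix.dotProduct_mulVec, Matrix.vecMul_transpose]
    simp [dotProduct, sq]
  -- invertibility
  have hdet : IsUnit M.det := by
    rw [isUnit_iff_ne_zero]
    intro hdet0
    obtain ⟨v, hv0, hMv⟩ := Matrix.exists_mulVec_eq_zero_iff.mpr hdet0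
    have h2 : ∑ k, ((B *ᵥ v) k) ^ 2 = 0 := by
      rw [← quad v, hMv, dotProduct_zero]
    have h1 := (hRIP v).1
    have := sumsq_pos v hv0
    nlinarith
  have hback : ∀ y : Fin s → ℝ, M *ᵥ (M⁻¹ *ᵥ y) = y := by
    intro y
    rw [Matrix.mulVec_mulVec, Matrix.mul_nonsing_inv M hdet, Matrix.one_mulVec]
  have hMsplit : ∀ u : Fin s → ℝ, M *ᵥ u = Bᵀ *ᵥ (B *ᵥ u) := by
    intro u
    rw [hM, ← Matrix.mulVec_mulVec]
  -- contraction for Bᵀ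
  have hBT : ∀ u : Fin m → ℝ, ∑ i, ((Bᵀ *ᵥ u) i) ^ 2 ≤ (1 + ϑu) * ∑ k, u k ^ 2 := by
    intro u
    set v := Bᵀ *ᵥ u with hv
    have e1 : ∑ i, v i ^ 2 = (B *ᵥ v) ⬝ᵥ u := by
      calc ∑ i, v i ^ 2 = v ⬝ᵥ v := by simp [dotProduct, sq]
        _ = v ⬝ᵥ (Bᵀ *ᵥ u) := by rw [← hv]
        _ = (B *ᵥ v) ⬝ᵥ u := by rw [Matrix.dotProduct_mulVec, Matrix.vecMul_transpose]
    have hcs : ((B *ᵥ v) ⬝ᵥ u) ^ 2 ≤ (∑ k, ((B *ᵥ v) k) ^ 2) * ∑ k, u k ^ 2 :=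
      Finset.sum_mul_sq_le_sq_mul_sq _ _ _
    have hBv := (hRIP v).2
    have hS : 0 ≤ ∑ i, v i ^ 2 := Finset.sum_nonneg fun _ _ => sq_nonneg _
    have hU : 0 ≤ ∑ k, u k ^ 2 := Finset.sum_nonneg fun _ _ => sq_nonneg _
    rcases eq_or_lt_of_le hS with h | h
    · rw [← h]; positivity
    · nlinarith [hcs, hBv, e1]
  -- bounds for quantities involving M⁻¹
  have invBounds : ∀ y : Fin s → ℝ,
      ((∑ i, y i ^ 2) / (1 + ϑu) ≤ y ⬝ᵥ (M⁻¹ *ᵥ y) ∧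
        y ⬝ᵥ (M⁻¹ *ᵥ y) ≤ (∑ i, y i ^ 2) / (1 - ϑl)) ∧
      ((∑ i, y i ^ 2) / (1 + ϑu) ^ 2 ≤ ∑ i, ((M⁻¹ *ᵥ y) i) ^ 2 ∧
        ∑ i, ((M⁻¹ *ᵥ y) i) ^ 2 ≤ (∑ i, y i ^ 2) / (1 - ϑl) ^ 2) := by
    intro y
    set w := M⁻¹ *ᵥ y with hw
    have hMw : M *ᵥ w = y := hback y
    have hW : 0 ≤ ∑ i, w i ^ 2 := Finset.sum_nonneg fun _ _ => sq_nonneg _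
    have hY : 0 ≤ ∑ i, y i ^ 2 := Finset.sum_nonneg fun _ _ => sq_nonneg _
    have hQ : y ⬝ᵥ w = ∑ k, ((B *ᵥ w) k) ^ 2 := by
      rw [← hMw, ← quad w, dotProduct_comm]
    have hQl : (1 - ϑl) * ∑ i, w i ^ 2 ≤ y ⬝ᵥ w := by rw [hQ]; exact (hRIP w).1
    have hQu : y ⬝ᵥ w ≤ (1 + ϑu) * ∑ i, w i ^ 2 := by rw [hQ]; exact (hRIP w).2
    have hYb : ∑ i, y i ^ 2 ≤ (1 + ϑu) * (y ⬝ᵥ w) := by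
      have e2 : M *ᵥ w = Bᵀ *ᵥ (B *ᵥ w) := hMsplit w
      calc ∑ i, y i ^ 2 = ∑ i, ((Bᵀ *ᵥ (B *ᵥ w)) i) ^ 2 := by rw [← e2, hMw]
        _ ≤ (1 + ϑu) * ∑ k, ((B *ᵥ w) k) ^ 2 := hBT _
        _ = (1 + ϑu) * (y ⬝ᵥ w) := by rw [hQ]
    have hCS : (y ⬝ᵥ w) ^ 2 ≤ (∑ i, y i ^ 2) * ∑ i, w i ^ 2 :=
      Finset.sum_mul_sq_le_sq_mul_sq _ _ _
    have hQ0 : 0 ≤ y ⬝ᵥ w := le_trans (by positivity) hQl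
    refine ⟨⟨?_, ?_⟩, ?_, ?_⟩
    · rw [div_le_iff₀ hb]; linarith
    · rw [le_div_iff₀ ha]
      rcases eq_or_lt_of_le hQ0 with h | h
      · nlinarith
      · nlinarith
    · rw [div_le_iff₀ (by positivity)]
      nlinarith
    · rw [le_div_iff₀ (by positivity)]
      rcases eq_or_lt_of_le hW with h | h
      · nlinarith
      · have h5 : ((1 - ϑl) * ∑ i, w i ^ 2) * ((1 - ϑl) * ∑ i, w i ^ 2) ≤
            (y ⬝ᵥ w) * (y ⬝ᵥ w) :=
          mul_le_mul hQl hQl (by positivity) hQ0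
        nlinarith [h5, hCS, h]
  -- diagonal entries
  have diag_bounds : ∀ (A : Matrix (Fin s) (Fin s) ℝ) (i : Fin s),
      A i i = (Pi.single i 1 : Fin s → ℝ) ⬝ᵥ (A *ᵥ (Pi.single i 1)) := by
    intro A i
    simp [Matrix.mulVec_single, dotProduct, Pi.single_apply]
  have single_sq : ∀ i : Fin s, ∑ j, (Pi.single i 1 : Fin s → ℝ) j ^ 2 = 1 := by
    intro i
    simp [Pi.single_apply, sq, Finset.sum_ite_eq']
  -- trace of M⁻¹
  have hT1l : (s:ℝ) / (1 + ϑu) ≤ (M⁻¹).trace := by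
    have : (M⁻¹).trace = ∑ i, M⁻¹ i i := rfl
    rw [this]
    have e : (s:ℝ) / (1 + ϑu) = ∑ _i : Fin s, (1:ℝ) / (1 + ϑu) := by
      rw [Finset.sum_const, Finset.card_univ, Fintype.card_fin, nsmul_eq_mul]; ring
    rw [e]
    refine Finset.sum_le_sum fun i _ => ?_
    have h := (invBounds (Pi.single i 1)).1.1
    rw [single_sq i] at h
    rw [diag_bounds M⁻¹ i]
    exact h
  have hT1u : (M⁻¹).trace ≤ (s:ℝ) / (1 - ϑl) := by
    have : (M⁻¹).trace = ∑ i, M⁻¹ i i := rfl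
    rw [this]
    have e : (s:ℝ) / (1 - ϑl) = ∑ _i : Fin s, (1:ℝ) / (1 - ϑl) := by
      rw [Finset.sum_const, Finset.card_univ, Fintype.card_fin, nsmul_eq_mul]; ring
    rw [e]
    refine Finset.sum_le_sum fun i _ => ?_
    have h := (invBounds (Pi.single i 1)).1.2
    rw [single_sq i] at h
    rw [diag_bounds M⁻¹ i]
    exact h
  -- trace of M
  have hTl : (s:ℝ) * (1 - ϑl) ≤ M.trace := by
    have : M.trace = ∑ i, M i i := rfl
    rw [this]
    have e : (s:ℝ) * (1 - ϑl) = ∑ _i : Fin s, (1 - ϑl) := by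
      rw [Finset.sum_const, Finset.card_univ, Fintype.card_fin, nsmul_eq_mul]
    rw [e]
    refine Finset.sum_le_sum fun i _ => ?_
    rw [diag_bounds M i, quad]
    have h := (hRIP (Pi.single i 1)).1
    rw [single_sq i] at h
    linarith
  have hTu : M.trace ≤ (s:ℝ) * (1 + ϑu) := by
    have : M.trace = ∑ i, M i i := rfl
    rw [this]
    have e : (s:ℝ) * (1 + ϑu) = ∑ _i : Fin s, (1 + ϑu) := by
      rw [Finset.sum_const, Finset.card_univ, Fintype.card_fin, nsmul_eq_mul]
    rw [e]
    refine Finset.sum_le_sum fun i _ => ?_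
    rw [diag_bounds M i, quad]
    have h := (hRIP (Pi.single i 1)).2
    rw [single_sq i] at h
    linarith
  have hxB := invBounds x
  have hT10 : 0 < (M⁻¹).trace := lt_of_lt_of_le (by positivity) hT1l
  -- instantiate the scalar lemma
  have hce' : ce = (s:ℝ) * ((m:ℝ) * σe ^ 2) / M.trace := by rw [hce]; ring_nf
  have hcnv : cn * ((∑ i, x i ^ 2) * σe ^ 2) = ((m:ℝ) * σe ^ 2) * σn ^ 2 := by
    rw [hcn]; field_simp
  have hγ' : γ = 2 * ((m:ℝ) * σe ^ 2) * σe ^ 2 * (∑ i, ((M⁻¹ *ᵥ x) i) ^ 2) /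
      ((σe ^ 2 * (∑ i, x i ^ 2) + σn ^ 2 + 2 * ((m:ℝ) * σe ^ 2) * σe ^ 2 * (x ⬝ᵥ M⁻¹ *ᵥ x))
        * (M⁻¹).trace) := by
    have hQ0 : 0 < x ⬝ᵥ M⁻¹ *ᵥ x := lt_of_lt_of_le (by positivity) hxB.1.1
    have hA : 0 < σe ^ 2 * (∑ i, x i ^ 2) + σn ^ 2 := by positivity
    have h4 : 0 < 2 * (m:ℝ) * σe ^ 4 * (x ⬝ᵥ M⁻¹ *ᵥ x) :=
      mul_pos (by positivity) hQ0
    have hD : 0 < σe ^ 2 * (∑ i, x i ^ 2) + σn ^ 2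
        + 2 * (m:ℝ) * σe ^ 4 * (x ⬝ᵥ M⁻¹ *ᵥ x) := by linarith
    have hD' : 0 < σe ^ 2 * (∑ i, x i ^ 2) + σn ^ 2
        + 2 * ((m:ℝ) * σe ^ 2) * σe ^ 2 * (x ⬝ᵥ M⁻¹ *ᵥ x) := by nlinarith
    rw [hγ, hd, hσx2, div_div]
    rw [div_eq_div_iff
      (ne_of_gt (mul_pos hD (mul_pos hA hT10)))
      (ne_of_gt (mul_pos hD' hT10))]
    ring
  obtain ⟨h1, h2⟩ := scalar_bounds (1 - ϑl) (1 + ϑu) (s:ℝ) (∑ i, x i ^ 2)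
    ((m:ℝ) * σe ^ 2) (σe ^ 2) (σn ^ 2)
    (∑ i, ((M⁻¹ *ᵥ x) i) ^ 2) (x ⬝ᵥ M⁻¹ *ᵥ x) ((M⁻¹).trace) M.trace ce cn γ
    ha hb hs hX (by positivity) (by positivity) (by positivity)
    hxB.2.2 hxB.2.1 hxB.1.1 hxB.1.2 hT1l hT1u hTl hTu hce' hcnv hγ'
  constructor
  · have e : (1 / (s:ℝ)) * ((1 + ϑu) ^ 3 / (1 - ϑl) ^ 2)
        * (2 * ce / (2 * (1 - ϑl) * ce + 1 + ϑu + cn / ce))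
      = (1 / (s:ℝ)) * ((1 + ϑu) ^ 3 / (1 - ϑl) ^ 2)
        * (2 * ce / (2 * (1 - ϑl) * ce + (1 + ϑu) + cn / ce)) := by ring_nf
    rw [e]; exact h1
  · have e : (1 / (s:ℝ)) * ((1 - ϑl) ^ 3 / (1 + ϑu) ^ 2)
        * (2 * ce / (2 * (1 + ϑu) * ce + 1 - ϑl + cn / ce))
      = (1 / (s:ℝ)) * ((1 - ϑl) ^ 3 / (1 + ϑu) ^ 2)
        * (2 * ce / (2 * (1 + ϑu) * ce + (1 - ϑl) + cn / ce)) := by ring_nf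
    rw [e]; exact h2
end

section
/- (Corollary 1, asymptotic 1/s behavior of γ_CCRB.) Fix ε_l ∈ (0,1), ε_u > 0, c_e > 0 and c_n ≥ 0. Then there exist positive constants A and B such that the following holds: for every m, s ≥ 1, every m×s real matrix B_S for which there exist ϑ_l ∈ (0, ε_l] and ϑ_u ∈ (0, ε_u] with (1−ϑ_l)‖u‖₂² ≤ ‖B_S u‖₂² ≤ (1+ϑ_u)‖u‖₂² for all u ∈ ℝˢ, and every nonzero x ∈ ℝˢ, σₑ > 0, σₙ ≥ 0 satisfying m·s·σₑ²/tr(B_SᵀB_S) = c_e and m·σₙ²/‖x‖₂² = c_n, the quantity γ := d/(σ_x²·tr(M⁻¹)), with M := B_SᵀB_S, σ_x² := σₑ²‖x‖₂² + σₙ² and d := σ_x²·2mσₑ⁴‖M⁻¹x‖₂²/(σ_x² + 2mσₑ⁴·xᵀM⁻¹x), satisfies A/s ≤ γ ≤ B/s. -/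
open Matrix

private lemma quad_eq' {m s : ℕ} (BS : Matrix (Fin m) (Fin s) ℝ) (x y : Fin s → ℝ) :
    x ⬝ᵥ (BSᵀ * BS) *ᵥ y = (BS *ᵥ x) ⬝ᵥ (BS *ᵥ y) := by
  rw [← Matrix.mulVec_mulVec, Matrix.dotProduct_mulVec, Matrix.vecMul_transpose]

private lemma dot_self_eq' {n : ℕ} (u : Fin n → ℝ) : u ⬝ᵥ u = ∑ i, u i ^ 2 := by
  simp [dotProduct, sq]

private lemma diag_eq' {n : ℕ} (A : Matrix (Fin n) (Fin n) ℝ) (i : Fin n) :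
    (Pi.single i 1 : Fin n → ℝ) ⬝ᵥ A *ᵥ (Pi.single i 1) = A i i := by
  simp [dotProduct, Matrix.mulVec, Pi.single_apply]

private lemma single_sq' {n : ℕ} (i : Fin n) :
    ∑ j, (Pi.single i 1 : Fin n → ℝ) j ^ 2 = 1 := by
  simp [Pi.single_apply, ite_pow]

private lemma trace_eq' {n : ℕ} (A : Matrix (Fin n) (Fin n) ℝ) : A.trace = ∑ i, A i i := by
  simp [Matrix.trace, Matrix.diag]

private lemma cs' {n : ℕ} (u v : Fin n → ℝ) :
    (u ⬝ᵥ v) ^ 2 ≤ (∑ i, u i ^ 2) * ∑ i, v i ^ 2 := by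
  simpa [dotProduct] using Finset.sum_mul_sq_le_sq_mul_sq Finset.univ u v

private lemma key' {m s : ℕ} (BS : Matrix (Fin m) (Fin s) ℝ) (α β : ℝ)
    (hα : 0 < α) (hβ : 0 < β)
    (hq : ∀ u : Fin s → ℝ, α * ∑ i, u i ^ 2 ≤ ∑ k, ((BS *ᵥ u) k) ^ 2 ∧
          ∑ k, ((BS *ᵥ u) k) ^ 2 ≤ β * ∑ i, u i ^ 2) :
    IsUnit (BSᵀ * BS).det ∧
    ∀ u : Fin s → ℝ,
      (∑ i, u i ^ 2) / β ≤ u ⬝ᵥ (BSᵀ * BS)⁻¹ *ᵥ u ∧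
      u ⬝ᵥ (BSᵀ * BS)⁻¹ *ᵥ u ≤ β * (∑ i, u i ^ 2) / α ^ 2 ∧
      (∑ i, u i ^ 2) / β ^ 2 ≤ ∑ i, (((BSᵀ * BS)⁻¹ *ᵥ u) i) ^ 2 ∧
      ∑ i, (((BSᵀ * BS)⁻¹ *ᵥ u) i) ^ 2 ≤ (∑ i, u i ^ 2) / α ^ 2 := by
  have hdet : IsUnit (BSᵀ * BS).det := by
    rw [isUnit_iff_ne_zero]
    intro h
    obtain ⟨v, hv0, hv⟩ := (Matrix.exists_mulVec_eq_zero_iff).2 h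
    have hNv : 0 < ∑ i, v i ^ 2 := by
      obtain ⟨i, hi⟩ := Function.ne_iff.1 hv0
      exact Finset.sum_pos' (fun j _ => sq_nonneg _)
        ⟨i, Finset.mem_univ i, pow_two_pos_of_ne_zero hi⟩
    have h1 := (hq v).1
    have h2 : v ⬝ᵥ (BSᵀ * BS) *ᵥ v = 0 := by rw [hv]; simp
    rw [quad_eq', dot_self_eq'] at h2
    nlinarith
  refine ⟨hdet, fun u => ?_⟩
  have hMM : (BSᵀ * BS) * (BSᵀ * BS)⁻¹ = 1 := Matrix.mul_nonsing_inv _ hdet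
  set v := (BSᵀ * BS)⁻¹ *ᵥ u with hvdef
  have hv : (BSᵀ * BS) *ᵥ v = u := by
    rw [hvdef, Matrix.mulVec_mulVec, hMM, Matrix.one_mulVec]
  set Nu := ∑ i, u i ^ 2
  set Nv := ∑ i, v i ^ 2
  set Qv := ∑ k, ((BS *ᵥ v) k) ^ 2
  have hNu0 : 0 ≤ Nu := Finset.sum_nonneg fun _ _ => sq_nonneg _
  have hNv0 : 0 ≤ Nv := Finset.sum_nonneg fun _ _ => sq_nonneg _
  have hQv0 : 0 ≤ Qv := Finset.sum_nonneg fun _ _ => sq_nonneg _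
  have h1 : u ⬝ᵥ (BSᵀ * BS)⁻¹ *ᵥ u = Qv := by
    rw [← hvdef, dotProduct_comm, ← hv, quad_eq', dot_self_eq']
  have h2 : α * Nv ≤ Qv := (hq v).1
  have h3 : Qv ≤ β * Nv := (hq v).2
  have h4 : Qv ^ 2 ≤ Nv * Nu := by
    have := cs' v u
    have hvu : v ⬝ᵥ u = Qv := by rw [← hv, quad_eq', dot_self_eq']
    rwa [hvu] at this
  have h5 : Nu ^ 2 ≤ β * Nu * Qv := by
    have hcs : ((BS *ᵥ u) ⬝ᵥ (BS *ᵥ v)) ^ 2 ≤ (∑ k, ((BS *ᵥ u) k) ^ 2) * Qv := by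
      simpa [dotProduct] using
        Finset.sum_mul_sq_le_sq_mul_sq Finset.univ (BS *ᵥ u) (BS *ᵥ v)
    have huu : (BS *ᵥ u) ⬝ᵥ (BS *ᵥ v) = Nu := by
      rw [← quad_eq', hv, dot_self_eq']
    have hQu : (∑ k, ((BS *ᵥ u) k) ^ 2) ≤ β * Nu := (hq u).2
    rw [huu] at hcs
    nlinarith
  have hA : Nu ≤ β * Qv := by
    rcases eq_or_lt_of_le hNu0 with h | h
    · nlinarith
    · nlinarith [mul_pos h h, mul_le_mul_of_nonneg_left h5 (le_of_lt h)]
  have hD : α ^ 2 * Nv ≤ Nu := by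
    have h6 : α ^ 2 * Nv ^ 2 ≤ Nv * Nu := by
      nlinarith [mul_le_mul h2 h2 (mul_nonneg hα.le hNv0) hQv0]
    rcases eq_or_lt_of_le hNv0 with h | h
    · nlinarith
    · nlinarith [mul_pos h h]
  refine ⟨?_, ?_, ?_, ?_⟩
  · rw [h1, div_le_iff₀ hβ]; nlinarith
  · rw [h1, le_div_iff₀ (by positivity)]; nlinarith
  · rw [div_le_iff₀ (by positivity)]; nlinarith
  · rw [le_div_iff₀ (by positivity)]; nlinarith

set_option maxHeartbeats 1000000 in
/-- Corollary 1 (asymptotic `1/s` behavior of `γ_CCRB`). For fixed `ε_l ∈ (0,1)`, `ε_u > 0`,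
`c_e > 0` and `c_n ≥ 0`, there exist positive constants `A` and `B` such that for every
sensing matrix `B_S` satisfying a restricted-isometry-type condition with constants
`ϑ_l ≤ ε_l`, `ϑ_u ≤ ε_u`, and every nonzero `x`, `σₑ > 0`, `σₙ ≥ 0` realizing the
perturbation level `c_e` and noise level `c_n`, the ratio `γ_CCRB` satisfies
`A/s ≤ γ_CCRB ≤ B/s`. -/
theorem gammaCCRB_asymptotic
    (εl εu ce cn : ℝ) (hεl : εl ∈ Set.Ioo (0 : ℝ) 1) (hεu : 0 < εu)
    (hce : 0 < ce) (hcn : 0 ≤ cn) :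
    ∃ A B : ℝ, 0 < A ∧ 0 < B ∧
      ∀ (m s : ℕ), 1 ≤ m → 1 ≤ s →
      ∀ BS : Matrix (Fin m) (Fin s) ℝ,
      (∃ ϑl ϑu : ℝ, ϑl ∈ Set.Ioc (0 : ℝ) εl ∧ ϑu ∈ Set.Ioc (0 : ℝ) εu ∧
        ∀ u : Fin s → ℝ,
          (1 - ϑl) * ∑ i, u i ^ 2 ≤ ∑ k, ((BS *ᵥ u) k) ^ 2 ∧
          ∑ k, ((BS *ᵥ u) k) ^ 2 ≤ (1 + ϑu) * ∑ i, u i ^ 2) →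
      ∀ (x : Fin s → ℝ), x ≠ 0 →
      ∀ σe σn : ℝ, 0 < σe → 0 ≤ σn →
      m * s * σe ^ 2 / (BSᵀ * BS).trace = ce →
      m * σn ^ 2 / (∑ i, x i ^ 2) = cn →
      ∀ σx2 d γ : ℝ,
        σx2 = σe ^ 2 * ∑ i, x i ^ 2 + σn ^ 2 →
        d = σx2 * (2 * m * σe ^ 4 * ∑ i, (((BSᵀ * BS)⁻¹ *ᵥ x) i) ^ 2)
              / (σx2 + 2 * m * σe ^ 4 * (x ⬝ᵥ (BSᵀ * BS)⁻¹ *ᵥ x)) →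
        γ = d / (σx2 * ((BSᵀ * BS)⁻¹).trace) →
        A / s ≤ γ ∧ γ ≤ B / s := by
  obtain ⟨hεl0, hεl1⟩ := hεl
  set α := 1 - εl with hαdef
  set β := 1 + εu with hβdef
  have hα : 0 < α := by rw [hαdef]; linarith
  have hβ : 0 < β := by rw [hβdef]; linarith
  set U := ce * β + cn + 2 * ce ^ 2 * β ^ 3 / α ^ 2 with hUdef
  set L := ce * α + cn + 2 * ce ^ 2 * α ^ 2 / β with hLdef
  have hU : 0 < U := by
    have h1 : 0 < ce * β := mul_pos hce hβ
    have h2 : 0 ≤ 2 * ce ^ 2 * β ^ 3 / α ^ 2 :=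
      le_of_lt (div_pos (by positivity) (pow_pos hα 2))
    rw [hUdef]; linarith
  have hL : 0 < L := by
    have h1 : 0 < ce * α := mul_pos hce hα
    have h2 : 0 ≤ 2 * ce ^ 2 * α ^ 2 / β :=
      le_of_lt (div_pos (by positivity) hβ)
    rw [hLdef]; linarith
  refine ⟨2 * ce ^ 2 * α ^ 4 / (β ^ 3 * U), 2 * ce ^ 2 * β ^ 3 / (α ^ 2 * L),
    div_pos (by positivity) (mul_pos (pow_pos hβ 3) hU),
    div_pos (by positivity) (mul_pos (pow_pos hα 2) hL), ?_⟩
  intro m s hm hs BS hBS x hx σe σn hσe hσn hceq hcneq σx2 d γ hσx2 hd hγ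
  have hm' : (0:ℝ) < m := by exact_mod_cast Nat.lt_of_lt_of_le Nat.zero_lt_one hm
  have hs' : (0:ℝ) < s := by exact_mod_cast Nat.lt_of_lt_of_le Nat.zero_lt_one hs
  obtain ⟨ϑl, ϑu, hϑl, hϑu, hRIP⟩ := hBS
  have hq : ∀ u : Fin s → ℝ, α * ∑ i, u i ^ 2 ≤ ∑ k, ((BS *ᵥ u) k) ^ 2 ∧
      ∑ k, ((BS *ᵥ u) k) ^ 2 ≤ β * ∑ i, u i ^ 2 := by
    intro u
    obtain ⟨h1, h2⟩ := hRIP u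
    have hsum : 0 ≤ ∑ i, u i ^ 2 := Finset.sum_nonneg fun _ _ => sq_nonneg _
    constructor
    · refine le_trans (mul_le_mul_of_nonneg_right ?_ hsum) h1
      rw [hαdef]; linarith [hϑl.2]
    · refine le_trans h2 (mul_le_mul_of_nonneg_right ?_ hsum)
      rw [hβdef]; linarith [hϑu.2]
  obtain ⟨hdet, hbd⟩ := key' BS α β hα hβ hq
  -- diagonal bounds for M
  have hdiagM : ∀ i, α ≤ (BSᵀ * BS) i i ∧ (BSᵀ * BS) i i ≤ β := by
    intro i
    have h := hq (Pi.single i 1)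
    rw [single_sq', mul_one, mul_one] at h
    have he : (BSᵀ * BS) i i = ∑ k, ((BS *ᵥ (Pi.single i 1 : Fin s → ℝ)) k) ^ 2 := by
      rw [← diag_eq' (BSᵀ * BS) i, quad_eq', dot_self_eq']
    rw [he]; exact h
  have htrMl : (s:ℝ) * α ≤ (BSᵀ * BS).trace := by
    rw [trace_eq']
    calc (s:ℝ) * α = ∑ _i : Fin s, α := by
          rw [Finset.sum_const, Finset.card_univ, Fintype.card_fin, nsmul_eq_mul]
      _ ≤ _ := Finset.sum_le_sum fun i _ => (hdiagM i).1
  have htrMu : (BSᵀ * BS).trace ≤ (s:ℝ) * β := by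
    rw [trace_eq']
    calc ∑ i, (BSᵀ * BS) i i ≤ ∑ _i : Fin s, β := Finset.sum_le_sum fun i _ => (hdiagM i).2
      _ = (s:ℝ) * β := by
          rw [Finset.sum_const, Finset.card_univ, Fintype.card_fin, nsmul_eq_mul]
  -- diagonal bounds for M⁻¹ and trace bounds
  have hdiagI : ∀ i, 1 / β ≤ (BSᵀ * BS)⁻¹ i i ∧ (BSᵀ * BS)⁻¹ i i ≤ β / α ^ 2 := by
    intro i
    have h := hbd (Pi.single i 1)
    rw [single_sq'] at h
    rw [← diag_eq' (BSᵀ * BS)⁻¹ i]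
    exact ⟨by simpa using h.1, by simpa using h.2.1⟩
  have hTl : (s:ℝ) / β ≤ ((BSᵀ * BS)⁻¹).trace := by
    rw [trace_eq']
    calc (s:ℝ) / β = ∑ _i : Fin s, 1 / β := by
          rw [Finset.sum_const, Finset.card_univ, Fintype.card_fin, nsmul_eq_mul]; ring
      _ ≤ _ := Finset.sum_le_sum fun i _ => (hdiagI i).1
  have hTu : ((BSᵀ * BS)⁻¹).trace ≤ (s:ℝ) * β / α ^ 2 := by
    rw [trace_eq']
    calc ∑ i, (BSᵀ * BS)⁻¹ i i ≤ ∑ _i : Fin s, β / α ^ 2 :=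
          Finset.sum_le_sum fun i _ => (hdiagI i).2
      _ = (s:ℝ) * β / α ^ 2 := by
          rw [Finset.sum_const, Finset.card_univ, Fintype.card_fin, nsmul_eq_mul]; ring
  obtain ⟨hQl, hQu, hPl, hPu⟩ := hbd x
  set N := ∑ i, x i ^ 2 with hNdef
  have hN : 0 < N := by
    obtain ⟨i, hi⟩ := Function.ne_iff.1 hx
    exact Finset.sum_pos' (fun j _ => sq_nonneg _)
      ⟨i, Finset.mem_univ i, pow_two_pos_of_ne_zero hi⟩
  set P := ∑ i, (((BSᵀ * BS)⁻¹ *ᵥ x) i) ^ 2 with hPdef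
  set Qx := x ⬝ᵥ (BSᵀ * BS)⁻¹ *ᵥ x with hQdef
  set T := ((BSᵀ * BS)⁻¹).trace with hTdef
  have hTpos : 0 < T := lt_of_lt_of_le (div_pos hs' hβ) hTl
  have htrM0 : 0 < (BSᵀ * BS).trace := lt_of_lt_of_le (mul_pos hs' hα) htrMl
  rw [div_eq_iff htrM0.ne'] at hceq
  rw [div_eq_iff hN.ne'] at hcneq
  -- bounds on σe², σn², σx2
  have hσel : ce * α / m ≤ σe ^ 2 := by
    rw [div_le_iff₀ hm']
    have h : ce * α * ((m:ℝ) * s) ≤ σe ^ 2 * (m:ℝ) * ((m:ℝ) * s) := by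
      calc ce * α * ((m:ℝ) * s) = (ce * (m:ℝ)) * ((s:ℝ) * α) := by ring
        _ ≤ (ce * (m:ℝ)) * (BSᵀ * BS).trace :=
            mul_le_mul_of_nonneg_left htrMl (by positivity)
        _ = ((m:ℝ) * s * σe ^ 2) * (m:ℝ) := by rw [hceq]; ring
        _ = σe ^ 2 * (m:ℝ) * ((m:ℝ) * s) := by ring
    exact le_of_mul_le_mul_right h (by positivity)
  have hσeu : σe ^ 2 ≤ ce * β / m := by
    rw [le_div_iff₀ hm']
    have h : σe ^ 2 * (m:ℝ) * ((m:ℝ) * s) ≤ ce * β * ((m:ℝ) * s) := by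
      calc σe ^ 2 * (m:ℝ) * ((m:ℝ) * s) = ((m:ℝ) * s * σe ^ 2) * (m:ℝ) := by ring
        _ = (ce * (m:ℝ)) * (BSᵀ * BS).trace := by rw [hceq]; ring
        _ ≤ (ce * (m:ℝ)) * ((s:ℝ) * β) :=
            mul_le_mul_of_nonneg_left htrMu (by positivity)
        _ = ce * β * ((m:ℝ) * s) := by ring
    exact le_of_mul_le_mul_right h (by positivity)
  have hσn2 : σn ^ 2 = cn * N / m := by
    rw [eq_div_iff hm'.ne']; linarith [hcneq]
  have hσx2l : (ce * α + cn) * N / m ≤ σx2 := by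
    rw [hσx2, hσn2]
    have h := mul_le_mul_of_nonneg_right hσel hN.le
    have he : (ce * α + cn) * N / (m:ℝ) = ce * α / m * N + cn * N / m := by ring
    linarith [he ▸ le_refl ((ce * α + cn) * N / (m:ℝ)), h]
  have hσx2u : σx2 ≤ (ce * β + cn) * N / m := by
    rw [hσx2, hσn2]
    have h := mul_le_mul_of_nonneg_right hσeu hN.le
    have he : (ce * β + cn) * N / (m:ℝ) = ce * β / m * N + cn * N / m := by ring
    linarith
  have hσx2pos : 0 < σx2 := by
    refine lt_of_lt_of_le (div_pos (mul_pos ?_ hN) hm') hσx2l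
    exact lt_of_lt_of_le (mul_pos hce hα) (le_add_of_nonneg_right hcn)
  -- σe⁴ bounds
  have hσe40 : σe ^ 4 = (σe ^ 2) ^ 2 := by ring
  have hσe4l : (ce * α / m) ^ 2 ≤ σe ^ 4 := by
    rw [hσe40]
    exact pow_le_pow_left₀ (le_of_lt (div_pos (mul_pos hce hα) hm')) hσel 2
  have hσe4u : σe ^ 4 ≤ (ce * β / m) ^ 2 := by
    rw [hσe40]
    exact pow_le_pow_left₀ (sq_nonneg σe) hσeu 2
  set R := 2 * (m:ℝ) * σe ^ 4 * P with hRdef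
  set D := σx2 + 2 * (m:ℝ) * σe ^ 4 * Qx with hDdef
  have hQxpos : 0 < Qx := lt_of_lt_of_le (div_pos hN hβ) hQl
  have hPpos : 0 < P := lt_of_lt_of_le (div_pos hN (pow_pos hβ 2)) hPl
  have h2m4 : 0 ≤ 2 * (m:ℝ) * σe ^ 4 := by positivity
  have hcoefl : 2 * (m:ℝ) * (ce * α / m) ^ 2 ≤ 2 * (m:ℝ) * σe ^ 4 :=
    mul_le_mul_of_nonneg_left hσe4l (by positivity)
  have hcoefu : 2 * (m:ℝ) * σe ^ 4 ≤ 2 * (m:ℝ) * (ce * β / m) ^ 2 :=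
    mul_le_mul_of_nonneg_left hσe4u (by positivity)
  have hcoefl0 : 0 ≤ 2 * (m:ℝ) * (ce * α / m) ^ 2 := by positivity
  have hRl : 2 * ce ^ 2 * α ^ 2 * N / (m * β ^ 2) ≤ R := by
    have he : 2 * ce ^ 2 * α ^ 2 * N / ((m:ℝ) * β ^ 2)
        = 2 * (m:ℝ) * (ce * α / m) ^ 2 * (N / β ^ 2) := by
      field_simp
    rw [he, hRdef]
    exact mul_le_mul hcoefl hPl (le_of_lt (div_pos hN (pow_pos hβ 2))) h2m4
  have hRu : R ≤ 2 * ce ^ 2 * β ^ 2 * N / (m * α ^ 2) := by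
    have he : 2 * ce ^ 2 * β ^ 2 * N / ((m:ℝ) * α ^ 2)
        = 2 * (m:ℝ) * (ce * β / m) ^ 2 * (N / α ^ 2) := by
      field_simp
    rw [he, hRdef]
    exact mul_le_mul hcoefu hPu hPpos.le (by positivity)
  have hDl : L * N / m ≤ D := by
    have t1 : 2 * ce ^ 2 * α ^ 2 * N / ((m:ℝ) * β) ≤ 2 * (m:ℝ) * σe ^ 4 * Qx := by
      have he : 2 * ce ^ 2 * α ^ 2 * N / ((m:ℝ) * β)
          = 2 * (m:ℝ) * (ce * α / m) ^ 2 * (N / β) := by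
        field_simp
      rw [he]
      exact mul_le_mul hcoefl hQl (le_of_lt (div_pos hN hβ)) h2m4
    have he : L * N / (m:ℝ)
        = (ce * α + cn) * N / m + 2 * ce ^ 2 * α ^ 2 * N / ((m:ℝ) * β) := by
      rw [hLdef]; field_simp
    rw [hDdef, he]
    linarith
  have hDu : D ≤ U * N / m := by
    have t1 : 2 * (m:ℝ) * σe ^ 4 * Qx ≤ 2 * ce ^ 2 * β ^ 3 * N / ((m:ℝ) * α ^ 2) := by
      have he : 2 * ce ^ 2 * β ^ 3 * N / ((m:ℝ) * α ^ 2)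
          = 2 * (m:ℝ) * (ce * β / m) ^ 2 * (β * N / α ^ 2) := by
        field_simp
      rw [he]
      exact mul_le_mul hcoefu hQu hQxpos.le (by positivity)
    have he : U * N / (m:ℝ)
        = (ce * β + cn) * N / m + 2 * ce ^ 2 * β ^ 3 * N / ((m:ℝ) * α ^ 2) := by
      rw [hUdef]; field_simp
    rw [hDdef, he]
    linarith
  have hDpos : 0 < D := lt_of_lt_of_le (div_pos (mul_pos hL hN) hm') hDl
  have hγ' : γ = R / (D * T) := by
    rw [hγ, hd]
    field_simp
  have hR0 : 0 ≤ R := by positivity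
  constructor
  · rw [hγ']
    have he : 2 * ce ^ 2 * α ^ 4 / (β ^ 3 * U) / (s:ℝ)
        = (2 * ce ^ 2 * α ^ 2 * N / (m * β ^ 2)) / ((U * N / m) * ((s:ℝ) * β / α ^ 2)) := by
      field_simp
    rw [he]
    refine div_le_div₀ hR0 hRl (mul_pos hDpos hTpos) ?_
    exact mul_le_mul hDu hTu hTpos.le (le_of_lt (div_pos (mul_pos hU hN) hm'))
  · rw [hγ']
    have he : 2 * ce ^ 2 * β ^ 3 / (α ^ 2 * L) / (s:ℝ)
        = (2 * ce ^ 2 * β ^ 2 * N / (m * α ^ 2)) / ((L * N / m) * ((s:ℝ) / β)) := by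
      field_simp
    rw [he]
    refine div_le_div₀ (by positivity) hRu ?_ ?_
    · exact mul_pos (div_pos (mul_pos hL hN) hm') (div_pos hs' hβ)
    · exact mul_le_mul hDl hTl (le_of_lt (div_pos hs' hβ)) hDpos.le
end

section
/- Let n ≥ 2 be an integer and σₑ ≥ 0 a real number, and define g(β) := β·(1−2σₑ²β)² / ((e^β − 1)·(1 + 2nσₑ⁴β)) for β > 0. Then 0 ≤ g(β) < 1 for every β > 0. -/
lemma cubic_le_exp {x : ℝ} (hx : 0 ≤ x) : 1 + x + x ^ 2 / 2 + x ^ 3 / 6 ≤ Real.exp x := by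
  have h := Real.sum_le_exp_of_nonneg hx 4
  simp [Finset.sum_range_succ, Nat.factorial] at h
  linarith

/-- For `n ≥ 2` and `σₑ ≥ 0`, the function
`g(β) = β(1−2σₑ²β)² / ((e^β − 1)(1 + 2nσₑ⁴β))` satisfies `0 ≤ g(β) < 1` for all `β > 0`. -/
theorem g_between_zero_and_one
    (n : ℕ) (hn : 2 ≤ n) (σe : ℝ) (hσe : 0 ≤ σe)
    (g : ℝ → ℝ)
    (hg : ∀ β, g β = β * (1 - 2 * σe ^ 2 * β) ^ 2
      / ((Real.exp β - 1) * (1 + 2 * n * σe ^ 4 * β))) :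
    ∀ β > (0 : ℝ), 0 ≤ g β ∧ g β < 1 := by
  intro β hβ
  have hs : (0:ℝ) ≤ σe ^ 2 := sq_nonneg _
  have hs4 : (0:ℝ) ≤ σe ^ 4 := by positivity
  have hE : β + β ^ 2 / 2 + β ^ 3 / 6 ≤ Real.exp β - 1 := by
    have := cubic_le_exp hβ.le; linarith
  have hEpos : 0 < Real.exp β - 1 := by nlinarith
  have hn' : (4:ℝ) ≤ 2 * n := by
    have : (2:ℝ) ≤ (n:ℝ) := by exact_mod_cast hn
    linarith
  have hD2 : (1:ℝ) + 4 * σe ^ 4 * β ≤ 1 + 2 * n * σe ^ 4 * β := by nlinarith [mul_nonneg (by linarith : (0:ℝ) ≤ 2 * n - 4) (mul_nonneg hs4 hβ.le)]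
  have hD2pos : (0:ℝ) < 1 + 4 * σe ^ 4 * β := by positivity
  have hDpos : (0:ℝ) < (Real.exp β - 1) * (1 + 2 * n * σe ^ 4 * β) := by nlinarith
  constructor
  · rw [hg]
    positivity
  · rw [hg, div_lt_one hDpos]
    have key : β * (1 - 2 * σe ^ 2 * β) ^ 2 < (β + β ^ 2 / 2 + β ^ 3 / 6) * (1 + 4 * σe ^ 4 * β) := by
      have h4 : σe ^ 4 = (σe ^ 2) ^ 2 := by ring
      nlinarith [mul_nonneg hβ.le (mul_nonneg hs hβ.le), sq_nonneg (σe ^ 2 * β * (β - 3/2)),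
        mul_nonneg (mul_nonneg hs hβ.le) hβ.le, sq_nonneg (σe ^ 2 * β),
        mul_nonneg (mul_nonneg (mul_nonneg hs hs) hβ.le) (sq_nonneg β)]
    calc β * (1 - 2 * σe ^ 2 * β) ^ 2
        < (β + β ^ 2 / 2 + β ^ 3 / 6) * (1 + 4 * σe ^ 4 * β) := key
      _ ≤ (Real.exp β - 1) * (1 + 2 * n * σe ^ 4 * β) := by
          apply mul_le_mul hE hD2 hD2pos.le hEpos.le
end

section
/- Fix integers n > s ≥ 1 with n ≥ 2 and a real number σₑ ≥ 0, and define g(β) := β·(1−2σₑ²β)² / ((e^β − 1)·(1 + 2nσₑ⁴β)) for β > 0. Then the function β ↦ (n−s)·β·e^{−β}/(e^β − 1) · (1 − 1/((n−s) + e^β·(1−g(β))^{−1})) tends to n − s as β tends to 0 from the right. -/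
open Filter Topology

/-- For `n > s ≥ 1`, `n ≥ 2` and `σₑ ≥ 0`, with
`g(β) = β(1−2σₑ²β)²/((e^β−1)(1+2nσₑ⁴β))`, the non-support term of the closed-form HCRB,
`(n−s)βe^{−β}/(e^β−1) · (1 − 1/((n−s) + e^β(1−g(β))⁻¹))`, tends to `n − s`
as `β → 0⁺`. -/
theorem dHCRB_tendsto
    (n s : ℕ) (hs : 1 ≤ s) (hsn : s < n) (hn : 2 ≤ n) (σe : ℝ) (hσe : 0 ≤ σe)
    (g : ℝ → ℝ)
    (hg : ∀ β, g β = β * (1 - 2 * σe ^ 2 * β) ^ 2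
      / ((Real.exp β - 1) * (1 + 2 * n * σe ^ 4 * β))) :
    Tendsto (fun β : ℝ =>
        ((n : ℝ) - s) * β * Real.exp (-β) / (Real.exp β - 1)
          * (1 - 1 / (((n : ℝ) - s) + Real.exp β * (1 - g β)⁻¹)))
      (𝓝[>] (0 : ℝ)) (𝓝 ((n : ℝ) - s)) := by
  -- slope of exp at 0
  have hslope : Tendsto (fun β : ℝ => (Real.exp β - 1) / β) (𝓝[≠] (0 : ℝ)) (𝓝 1) := by
    have h := (hasDerivAt_iff_tendsto_slope).1 (Real.hasDerivAt_exp 0)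
    simp only [Real.exp_zero] at h
    refine h.congr fun β => ?_
    simp [slope_def_field]
  have hβdiv : Tendsto (fun β : ℝ => β / (Real.exp β - 1)) (𝓝[>] (0 : ℝ)) (𝓝 1) := by
    have := (hslope.mono_left (nhdsWithin_mono _ (fun x hx => ne_of_gt hx))).inv₀ one_ne_zero
    simp only [inv_one] at this
    refine this.congr fun β => ?_
    rw [inv_div]
  -- exp tendsto 1
  have hexp1 : Tendsto (fun β : ℝ => Real.exp β) (𝓝[>] (0 : ℝ)) (𝓝 1) := by
    have := Real.continuous_exp.continuousAt (x := (0 : ℝ))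
    simpa [Real.exp_zero] using this.tendsto.mono_left nhdsWithin_le_nhds
  have hexpneg1 : Tendsto (fun β : ℝ => Real.exp (-β)) (𝓝[>] (0 : ℝ)) (𝓝 1) := by
    have : ContinuousAt (fun β : ℝ => Real.exp (-β)) 0 := by fun_prop
    simpa [Real.exp_zero] using this.tendsto.mono_left nhdsWithin_le_nhds
  -- second factor of g tendsto 1
  have h2 : Tendsto (fun β : ℝ => (1 - 2 * σe ^ 2 * β) ^ 2 / (1 + 2 * n * σe ^ 4 * β))
      (𝓝[>] (0 : ℝ)) (𝓝 1) := by
    have hc : ContinuousAt (fun β : ℝ => (1 - 2 * σe ^ 2 * β) ^ 2 / (1 + 2 * n * σe ^ 4 * β)) 0 := by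
      apply ContinuousAt.div (by fun_prop) (by fun_prop)
      norm_num
    have h3 := hc.tendsto.mono_left (nhdsWithin_le_nhds (s := Set.Ioi (0:ℝ)))
    simpa using h3
  -- g tendsto 1
  have hg1 : Tendsto g (𝓝[>] (0 : ℝ)) (𝓝 1) := by
    have := hβdiv.mul h2
    rw [one_mul] at this
    refine this.congr fun β => ?_
    rw [hg β, div_mul_div_comm]
  -- eventually g β < 1
  have hpos : ∀ᶠ β in 𝓝[>] (0 : ℝ), 0 < 1 - g β := by
    have hδ : (0 : ℝ) < (σe ^ 2 + 1)⁻¹ := by positivity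
    filter_upwards [Ioo_mem_nhdsGT_of_mem (Set.mem_Ico.2 ⟨le_rfl, hδ⟩)] with β hβ
    obtain ⟨hβ0, hβδ⟩ := hβ
    have hexpβ : β + 1 < Real.exp β := Real.add_one_lt_exp (ne_of_gt hβ0)
    have ht : σe ^ 2 * β ≤ 1 := by
      nlinarith [mul_lt_mul_of_pos_left hβδ (show (0:ℝ) < σe ^ 2 + 1 by positivity),
        mul_inv_cancel₀ (ne_of_gt (show (0:ℝ) < σe ^ 2 + 1 by positivity))]
    have hsq : (1 - 2 * σe ^ 2 * β) ^ 2 ≤ 1 := by nlinarith [mul_nonneg (sq_nonneg σe) hβ0.le]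
    have hden1 : (0 : ℝ) < 1 + 2 * n * σe ^ 4 * β := by positivity
    have hnum : β * (1 - 2 * σe ^ 2 * β) ^ 2 < (Real.exp β - 1) * (1 + 2 * n * σe ^ 4 * β) := by
      have h1 : β * (1 - 2 * σe ^ 2 * β) ^ 2 ≤ β := by nlinarith
      have hA : (0:ℝ) < Real.exp β - 1 := by linarith
      have hB : (0:ℝ) ≤ 2 * n * σe ^ 4 * β := by positivity
      have h2 : (Real.exp β - 1) ≤ (Real.exp β - 1) * (1 + 2 * n * σe ^ 4 * β) := by
        nlinarith [mul_nonneg hA.le hB]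
      linarith
    have : g β < 1 := by
      rw [hg β, div_lt_one (by nlinarith)]
      exact hnum
    linarith
  -- 1 - g tends to 0 within Ioi
  have h1g : Tendsto (fun β => 1 - g β) (𝓝[>] (0 : ℝ)) (𝓝[>] (0 : ℝ)) := by
    rw [tendsto_nhdsWithin_iff]
    constructor
    · have : Tendsto (fun β => (1:ℝ) - g β) (𝓝[>] (0:ℝ)) (𝓝 (1 - 1)) :=
        tendsto_const_nhds.sub hg1
      simpa using this
    · exact hpos
  have hinv : Tendsto (fun β => (1 - g β)⁻¹) (𝓝[>] (0 : ℝ)) atTop :=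
    tendsto_inv_nhdsGT_zero.comp h1g
  have hmul : Tendsto (fun β => Real.exp β * (1 - g β)⁻¹) (𝓝[>] (0 : ℝ)) atTop :=
    Filter.Tendsto.pos_mul_atTop one_pos hexp1 hinv
  have hadd : Tendsto (fun β => ((n : ℝ) - s) + Real.exp β * (1 - g β)⁻¹) (𝓝[>] (0 : ℝ)) atTop :=
    tendsto_atTop_add_const_left _ _ hmul
  have hinv2 : Tendsto (fun β => (((n : ℝ) - s) + Real.exp β * (1 - g β)⁻¹)⁻¹)
      (𝓝[>] (0 : ℝ)) (𝓝 0) := hadd.inv_tendsto_atTop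
  have hbracket : Tendsto (fun β => 1 - 1 / (((n : ℝ) - s) + Real.exp β * (1 - g β)⁻¹))
      (𝓝[>] (0 : ℝ)) (𝓝 1) := by
    have hb : Tendsto (fun β => (1:ℝ) - (((n : ℝ) - s) + Real.exp β * (1 - g β)⁻¹)⁻¹)
        (𝓝[>] (0:ℝ)) (𝓝 (1 - 0)) := tendsto_const_nhds.sub hinv2
    simp only [one_div]
    simpa using hb
  have hfinal := (((tendsto_const_nhds (x := ((n : ℝ) - s))).mul hexpneg1).mul hβdiv).mul hbracket
  have hval : ((n : ℝ) - s) * 1 * 1 * 1 = ((n : ℝ) - s) := by ring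
  rw [hval] at hfinal
  refine hfinal.congr fun β => ?_
  ring
end
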